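/- arXiv:2603.02071 — 7 statements merged into one kernel-verified Lean document; each statement's English description precedes it below -/
import Mathlib

section
/- For every integer n ≥ 1 and every integer k with 0 ≤ k ≤ n, the binomial coefficient satisfies C(n,k)·2^(−n) < 4/(5√n). -/
open Nat

lemma invariant (m : ℕ) (hm : 6 ≤ m) :
    (Nat.centralBinom m : ℝ)^2 * (100*m+26) * 16777216 ≤ 534463776 * 16 ^ m := by
  induction m, hm using Nat.le_induction with
  | base => norm_num [Nat.centralBinom, Nat.choose]
  | succ m hm ih =>
    have h1 : ((m:ℝ)+1) * (Nat.centralBinom (m+1) : ℝ) = 2*(2*m+1)*(Nat.centralBinom m : ℝ) := by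
      exact_mod_cast Nat.succ_mul_centralBinom_succ m
    have hmr : (6:ℝ) ≤ m := by exact_mod_cast hm
    have key : 4*(2*(m:ℝ)+1)^2 * (100*((m:ℝ)+1)+26) ≤ 16*((m:ℝ)+1)^2 * (100*(m:ℝ)+26) := by
      nlinarith [sq_nonneg ((m:ℝ)-6)]
    have hpos : (0:ℝ) < ((m:ℝ)+1)^2 := by positivity
    have main : ((m:ℝ)+1)^2 * ((Nat.centralBinom (m+1) : ℝ)^2 * (100*((m:ℝ)+1)+26) * 16777216)
        ≤ ((m:ℝ)+1)^2 * (534463776 * 16^(m+1)) := by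
      calc ((m:ℝ)+1)^2 * ((Nat.centralBinom (m+1) : ℝ)^2 * (100*((m:ℝ)+1)+26) * 16777216)
          = (((m:ℝ)+1) * (Nat.centralBinom (m+1) : ℝ))^2 * ((100*((m:ℝ)+1)+26) * 16777216) := by
            ring
        _ = (2*(2*(m:ℝ)+1)*(Nat.centralBinom m : ℝ))^2 * ((100*((m:ℝ)+1)+26) * 16777216) := by
            rw [h1]
        _ = (4*(2*(m:ℝ)+1)^2*(100*((m:ℝ)+1)+26)) * ((Nat.centralBinom m : ℝ)^2 * 16777216) := by
            ring
        _ ≤ (16*((m:ℝ)+1)^2*(100*(m:ℝ)+26)) * ((Nat.centralBinom m : ℝ)^2 * 16777216) := by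
            exact mul_le_mul_of_nonneg_right key (by positivity)
        _ = (16*((m:ℝ)+1)^2) * ((Nat.centralBinom m : ℝ)^2 * (100*(m:ℝ)+26) * 16777216) := by
            ring
        _ ≤ (16*((m:ℝ)+1)^2) * (534463776 * 16^m) := by
            exact mul_le_mul_of_nonneg_left ih (by positivity)
        _ = ((m:ℝ)+1)^2 * (534463776 * 16^(m+1)) := by ring
    have := le_of_mul_le_mul_left main hpos
    push_cast
    linarith [this]

lemma keysq (m : ℕ) (hm : 1 ≤ m) :
    (Nat.centralBinom m : ℝ)^2 * (2*m) * 25 < 16 * 16^m := by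
  rcases le_or_gt 6 m with h6 | h6
  · have hinv := invariant m h6
    have hB : (1:ℝ) ≤ (Nat.centralBinom m : ℝ) := by
      exact_mod_cast Nat.centralBinom_pos m
    have hmr : (6:ℝ) ≤ m := by exact_mod_cast h6
    nlinarith [sq_nonneg (Nat.centralBinom m : ℝ)]
  · interval_cases m
    · have : Nat.centralBinom 1 = 2 := by decide
      rw [this]; norm_num
    · have : Nat.centralBinom 2 = 6 := by decide
      rw [this]; norm_num
    · have : Nat.centralBinom 3 = 20 := by decide
      rw [this]; norm_num
    · have : Nat.centralBinom 4 = 70 := by decide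
      rw [this]; norm_num
    · have : Nat.centralBinom 5 = 252 := by decide
      rw [this]; norm_num

lemma even_bound (m : ℕ) (hm : 1 ≤ m) :
    (Nat.centralBinom m : ℝ) / 4^m < 4 / (5 * Real.sqrt (2*m)) := by
  have hmr : (1:ℝ) ≤ m := by exact_mod_cast hm
  have h2m : (0:ℝ) < 2*m := by linarith
  have hs : (0:ℝ) < Real.sqrt (2*m) := Real.sqrt_pos.mpr h2m
  rw [div_lt_div_iff₀ (by positivity) (by positivity)]
  have hb : (0:ℝ) ≤ 4 * 4^m := by positivity
  refine lt_of_pow_lt_pow_left₀ 2 hb ?_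
  have hsq : Real.sqrt (2*m) ^ 2 = 2*m := Real.sq_sqrt (le_of_lt h2m)
  have h16 : ((4:ℝ)^m)^2 = 16^m := by
    rw [← pow_mul, mul_comm, pow_mul]
    norm_num
  have hk := keysq m hm
  calc ((Nat.centralBinom m : ℝ) * (5 * Real.sqrt (2*m)))^2
      = (Nat.centralBinom m : ℝ)^2 * (2*m) * 25 := by
        rw [mul_pow, mul_pow]; rw [hsq]; ring
    _ < 16 * 16^m := hk
    _ = (4 * 4^m)^2 := by rw [mul_pow, h16]; norm_num

/-- For `n ≥ 1` and `0 ≤ k ≤ n`, the central binomial bound `C(n,k)·2^(−n) < 4/(5√n)`. -/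
theorem choose_mul_two_pow_neg_lt (n k : ℕ) (hn : 1 ≤ n) (hk : k ≤ n) :
    (n.choose k : ℝ) * (2 : ℝ)⁻¹ ^ n < 4 / (5 * Real.sqrt n) := by
  rcases Nat.even_or_odd n with ⟨m, hm⟩ | ⟨m, hm⟩
  · -- even case : n = m + m
    subst hm
    have hm1 : 1 ≤ m := by omega
    have hc : ((m+m).choose k : ℝ) ≤ (Nat.centralBinom m : ℝ) := by
      exact_mod_cast (two_mul m ▸ Nat.choose_le_centralBinom k m : (m+m).choose k ≤ _)
    have h2 : ((2:ℝ)⁻¹)^(m+m) = ((4:ℝ)^m)⁻¹ := by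
      have h4 : (2:ℝ)^(m+m) = 4^m := by
        rw [pow_add, ← mul_pow]; norm_num
      rw [inv_pow, h4]
    have hsqrt : Real.sqrt (2*m) = Real.sqrt ((m+m : ℕ) : ℝ) := by
      congr 1
      push_cast
      ring
    calc ((m+m).choose k : ℝ) * (2:ℝ)⁻¹^(m+m)
        ≤ (Nat.centralBinom m : ℝ) * ((4:ℝ)^m)⁻¹ := by
          rw [h2]; gcongr
      _ = (Nat.centralBinom m : ℝ) / 4^m := by rw [div_eq_mul_inv]
      _ < 4 / (5 * Real.sqrt (2*m)) := even_bound m hm1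
      _ = 4 / (5 * Real.sqrt ((m+m : ℕ) : ℝ)) := by rw [hsqrt]
  · -- odd case : n = 2*m+1
    subst hm
    have hmid : (2*m+1).choose k ≤ (2*m+1).choose m := by
      have h := Nat.choose_le_middle k (2*m+1)
      rwa [show (2*m+1)/2 = m by omega] at h
    have hsymm : (2*m+1).choose (m+1) = (2*m+1).choose m := by
      have h := Nat.choose_symm (show m+1 ≤ 2*m+1 by omega)
      rw [show 2*m+1-(m+1) = m by omega] at h
      exact h.symm
    have hdouble : Nat.centralBinom (m+1) = 2 * ((2*m+1).choose m) := by
      rw [Nat.centralBinom, show 2*(m+1) = (2*m+1)+1 by ring,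
        show (2*m+1)+1 = (2*m+1)+1 from rfl]
      rw [show ((2*m+1)+1).choose (m+1) = (2*m+1).choose m + (2*m+1).choose (m+1) from
        Nat.choose_succ_succ (2*m+1) m ▸ rfl]
      omega
    have hc : ((2*m+1).choose k : ℝ) ≤ (Nat.centralBinom (m+1) : ℝ) / 2 := by
      rw [hdouble]
      push_cast
      have : ((2*m+1).choose k : ℝ) ≤ ((2*m+1).choose m : ℝ) := by exact_mod_cast hmid
      linarith
    have h2 : ((2:ℝ)⁻¹)^(2*m+1) = (2:ℝ)⁻¹ * ((4:ℝ)^m)⁻¹ := by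
      rw [← inv_pow, pow_succ, pow_mul]
      norm_num
      ring
    have hnr : (0:ℝ) < ((2*m+1 : ℕ) : ℝ) := by positivity
    have hsle : Real.sqrt ((2*m+1 : ℕ) : ℝ) ≤ Real.sqrt (2*((m+1:ℕ):ℝ)) := by
      apply Real.sqrt_le_sqrt
      push_cast
      linarith
    have hspos : (0:ℝ) < Real.sqrt ((2*m+1 : ℕ) : ℝ) := by
      apply Real.sqrt_pos.mpr hnr
    calc ((2*m+1).choose k : ℝ) * (2:ℝ)⁻¹^(2*m+1)
        ≤ ((Nat.centralBinom (m+1) : ℝ) / 2) * ((2:ℝ)⁻¹ * ((4:ℝ)^m)⁻¹) := by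
          rw [h2]
          exact mul_le_mul_of_nonneg_right hc (by positivity)
      _ = (Nat.centralBinom (m+1) : ℝ) / 4^(m+1) := by
          rw [pow_succ]
          rw [div_eq_mul_inv, div_eq_mul_inv, mul_inv]
          norm_num
          ring
      _ < 4 / (5 * Real.sqrt (2*((m+1:ℕ):ℝ))) := even_bound (m+1) (by omega)
      _ ≤ 4 / (5 * Real.sqrt ((2*m+1 : ℕ) : ℝ)) := by gcongr
end

section
/- For every integer n ≥ 1 and every integer k with 0 ≤ k ≤ n, the binomial coefficient satisfies C(n,k)·2^(−n) ≤ Γ(n/2 + 1/2) / (Γ(n/2 + 1)·√π), where Γ denotes the real Gamma function. -/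
/-!
By log-convexity of `Γ`, `Γ(k+1) Γ(n-k+1) ≥ Γ(n/2+1)²`, i.e. `C(n,k) Γ(n/2+1)² ≤ n!`.
Legendre's duplication formula gives `Γ(n/2+1/2) Γ(n/2+1) = 2^(-n) √π n!`, so the right-hand
side equals `2^(-n) n! / Γ(n/2+1)²`.
-/

open Real

namespace Real

theorem Gamma_midpoint_sq_le_mul {a b : ℝ} (ha : 0 < a) (hb : 0 < b) :
    Gamma ((a + b) / 2) ^ 2 ≤ Gamma a * Gamma b := by
  have h := Gamma_mul_add_mul_le_rpow_Gamma_mul_rpow_Gamma ha hb one_half_pos one_half_pos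
    (add_halves 1)
  rw [← sqrt_eq_rpow, ← sqrt_eq_rpow, ← sqrt_mul (Gamma_pos_of_pos ha).le,
    show 1 / 2 * a + 1 / 2 * b = (a + b) / 2 by ring] at h
  exact (le_sqrt (Gamma_pos_of_pos (by positivity)).le
    (mul_pos (Gamma_pos_of_pos ha) (Gamma_pos_of_pos hb)).le).mp h

theorem Gamma_half_add_half_mul_Gamma_half_add_one (s : ℝ) :
    Gamma (s / 2 + 1 / 2) * Gamma (s / 2 + 1) = 2 ^ (-s) * √π * Gamma (s + 1) := by
  have h := Gamma_mul_Gamma_add_half (s / 2 + 1 / 2)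
  rw [show s / 2 + 1 / 2 + 1 / 2 = s / 2 + 1 by ring, show 2 * (s / 2 + 1 / 2) = s + 1 by ring,
    show 1 - (s + 1) = -s by ring] at h
  rw [h]
  ring

end Real

theorem choose_mul_Gamma_half_add_one_sq_le_factorial {n k : ℕ} (hk : k ≤ n) :
    (n.choose k : ℝ) * Gamma ((n : ℝ) / 2 + 1) ^ 2 ≤ n.factorial := by
  have hmid : ((k + 1 : ℝ) + ((n - k : ℕ) + 1)) / 2 = (n : ℝ) / 2 + 1 := by
    rw [Nat.cast_sub hk]; ring
  have hconv := Gamma_midpoint_sq_le_mul (a := k + 1) (b := (n - k : ℕ) + 1)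
    (by positivity) (by positivity)
  rw [hmid, Gamma_nat_eq_factorial, Gamma_nat_eq_factorial] at hconv
  calc (n.choose k : ℝ) * Gamma ((n : ℝ) / 2 + 1) ^ 2
      ≤ n.choose k * (k.factorial * (n - k).factorial) := by gcongr
    _ = n.factorial := by
      rw [← Nat.choose_mul_factorial_mul_factorial hk]; push_cast; ring

theorem choose_mul_two_pow_neg_le_gamma_general (n k : ℕ) (hk : k ≤ n) :
    (n.choose k : ℝ) * (2 : ℝ)⁻¹ ^ n ≤
      Real.Gamma ((n : ℝ) / 2 + 1 / 2) /
        (Real.Gamma ((n : ℝ) / 2 + 1) * Real.sqrt Real.pi) := by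
  have hΓ : 0 < Gamma ((n : ℝ) / 2 + 1) := Gamma_pos_of_pos (by positivity)
  have hdup := Gamma_half_add_half_mul_Gamma_half_add_one n
  rw [rpow_neg zero_le_two, rpow_natCast, ← inv_pow, Gamma_nat_eq_factorial] at hdup
  have hrhs : Gamma ((n : ℝ) / 2 + 1 / 2) / (Gamma ((n : ℝ) / 2 + 1) * √π) =
      n.factorial * (2 : ℝ)⁻¹ ^ n / Gamma ((n : ℝ) / 2 + 1) ^ 2 := by
    rw [div_eq_div_iff (by positivity) (by positivity)]
    linear_combination Gamma ((n : ℝ) / 2 + 1) * hdup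
  rw [hrhs, le_div_iff₀ (by positivity), mul_right_comm]
  exact mul_le_mul_of_nonneg_right (choose_mul_Gamma_half_add_one_sq_le_factorial hk)
    (by positivity)

/-- For `n ≥ 1` and `0 ≤ k ≤ n`,
`C(n,k)·2^(−n) ≤ Γ(n/2 + 1/2) / (Γ(n/2 + 1)·√π)`. -/
theorem choose_mul_two_pow_neg_le_gamma (n k : ℕ) (hn : 1 ≤ n) (hk : k ≤ n) :
    (n.choose k : ℝ) * (2 : ℝ)⁻¹ ^ n ≤
      Real.Gamma ((n : ℝ) / 2 + 1 / 2) /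
        (Real.Gamma ((n : ℝ) / 2 + 1) * Real.sqrt Real.pi) :=
  choose_mul_two_pow_neg_le_gamma_general n k hk
end

section
/- For all integers n ≥ 1 and d ≥ 1 and every integer s with 1 ≤ s ≤ n, setting Δ = min(⌈2s/3⌉, ⌈30·((s·ln 2)/d + ln n)⌉), there exists an assignment N that gives each of n vertices v_1, …, v_n a set N(v_i) of exactly Δ elements of a fixed s-element set Q, such that for every subset B ⊆ Q with |B| < s/3, the number of indices i ∈ {1,…,n} with |N(v_i) ∩ B| ≥ Δ/2 is strictly less than d. -/
/-!
Count assignments `N : Fin n → (Δ-subsets of Q)`. For a fixed `B` with `|B| ≤ s/3`, double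
counting the pairs `S ⊆ A ∩ B` gives `∑_A 2^|A ∩ B| ≤ (1 + |B|/s)^Δ C(s,Δ) ≤ (4/3)^Δ C(s,Δ)`, so
by Markov's inequality at most a fraction `(4/3)^Δ / √2^Δ = √(8/9)^Δ` of the `Δ`-sets meet `B`
in at least `Δ/2` points. Fixing `d` heavy vertices, at most a fraction `n^d √(8/9)^(Δd)` of all
assignments make `B` bad, and a union bound over the `2^s` sets `B` leaves a good assignment as
soon as `2^s n^d √(8/9)^(Δd) < 1`. Since `log √(8/9) < -1/30`, this is what
`Δ ≥ 30 (s log 2 / d + log n)` guarantees. If instead `Δ/2 ≥ s/3`, then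
`|N(v) ∩ B| ≤ |B| < Δ/2` and any assignment works.
-/

open scoped Classical

open Finset

namespace Nat

theorem descFactorial_mul_pow_le_descFactorial_mul_pow {b s : ℕ} (hbs : b ≤ s) (j : ℕ) :
    b.descFactorial j * s ^ j ≤ s.descFactorial j * b ^ j := by
  induction j with
  | zero => simp
  | succ j ih =>
    have key : (b - j) * s ≤ (s - j) * b := by
      rw [Nat.sub_mul, Nat.sub_mul, Nat.mul_comm s b]
      exact Nat.sub_le_sub_left (Nat.mul_le_mul_left j hbs) _
    rw [descFactorial_succ, descFactorial_succ, pow_succ, pow_succ]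
    calc (b - j) * b.descFactorial j * (s ^ j * s)
        = ((b - j) * s) * (b.descFactorial j * s ^ j) := by ring
      _ ≤ ((s - j) * b) * (s.descFactorial j * b ^ j) := Nat.mul_le_mul key ih
      _ = (s - j) * s.descFactorial j * (b ^ j * b) := by ring

theorem choose_mul_pow_le_choose_mul_pow {b s : ℕ} (hbs : b ≤ s) (j : ℕ) :
    b.choose j * s ^ j ≤ s.choose j * b ^ j := by
  have h := descFactorial_mul_pow_le_descFactorial_mul_pow hbs j
  rw [descFactorial_eq_factorial_mul_choose, descFactorial_eq_factorial_mul_choose,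
    mul_assoc, mul_assoc] at h
  exact Nat.le_of_mul_le_mul_left h j.factorial_pos

theorem cast_choose_le_cast_choose_mul_div_pow {K : Type*} [Field K] [LinearOrder K]
    [IsStrictOrderedRing K] {b s : ℕ} (hbs : b ≤ s) (j : ℕ) :
    (b.choose j : K) ≤ s.choose j * ((b : K) / s) ^ j := by
  rcases s.eq_zero_or_pos with rfl | hs
  · obtain rfl : b = 0 := Nat.le_zero.1 hbs
    cases j <;> simp
  have hs' : (0 : K) < (s : K) ^ j := by positivity
  rw [div_pow, mul_div_assoc', le_div_iff₀ hs']
  exact_mod_cast choose_mul_pow_le_choose_mul_pow hbs j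

end Nat

theorem sum_range_choose_mul_pow_le {R : Type*} [CommSemiring R] [PartialOrder R]
    [IsOrderedRing R] {x : R} (hx : 0 ≤ x) (k N : ℕ) :
    ∑ j ∈ range N, (k.choose j : R) * x ^ j ≤ (1 + x) ^ k := by
  calc ∑ j ∈ range N, (k.choose j : R) * x ^ j
      ≤ ∑ j ∈ range (N + k + 1), (k.choose j : R) * x ^ j :=
        sum_le_sum_of_subset_of_nonneg (range_subset_range.2 (by omega))
          fun _ _ _ => by positivity
    _ = ∑ j ∈ range (k + 1), (k.choose j : R) * x ^ j := by
        refine (sum_subset (range_subset_range.2 (by omega)) fun j _ hj => ?_).symm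
        rw [Nat.choose_eq_zero_of_lt (by simpa using hj), Nat.cast_zero, zero_mul]
    _ = (1 + x) ^ k := by
        rw [add_comm 1 x, add_pow]
        exact sum_congr rfl fun j _ => by ring

section PowersetCard

variable {α : Type*} [Fintype α] [DecidableEq α]

theorem card_powersetCard_filter_superset_mul_choose_le (S : Finset α) (k : ℕ) :
    #{A ∈ powersetCard k univ | S ⊆ A} * (Fintype.card α).choose #S
      ≤ (Fintype.card α).choose k * k.choose #S := by
  by_cases hSk : #S ≤ k
  · have hle : #{A ∈ powersetCard k univ | S ⊆ A} ≤ #(powersetCard (k - #S) Sᶜ) := by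
      refine card_le_card_of_injOn (· \ S) (fun A hA => ?_) (fun A hA A' hA' h => ?_)
      · rw [mem_coe, mem_filter, mem_powersetCard] at hA
        rw [mem_coe, mem_powersetCard, card_sdiff_of_subset hA.2, hA.1.2]
        exact ⟨fun x hx => mem_compl.2 (mem_sdiff.1 hx).2, rfl⟩
      · rw [mem_coe, mem_filter] at hA hA'
        rw [← sdiff_union_of_subset hA.2, ← sdiff_union_of_subset hA'.2]
        exact congrArg (· ∪ S) h
    rw [card_powersetCard, card_compl] at hle
    calc #{A ∈ powersetCard k univ | S ⊆ A} * (Fintype.card α).choose #S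
        ≤ (Fintype.card α - #S).choose (k - #S) * (Fintype.card α).choose #S :=
          Nat.mul_le_mul_right _ hle
      _ = (Fintype.card α).choose k * k.choose #S := by rw [Nat.choose_mul hSk, mul_comm]
  · rw [Nat.choose_eq_zero_of_lt (not_le.1 hSk), mul_zero, Nat.le_zero, mul_eq_zero]
    refine Or.inl (card_eq_zero.2 (filter_eq_empty_iff.2 fun A hA hSA => hSk ?_))
    exact (mem_powersetCard.1 hA).2 ▸ card_le_card hSA

theorem sum_powersetCard_two_pow_card_inter_eq (B : Finset α) (k : ℕ) :
    ∑ A ∈ powersetCard k univ, 2 ^ #(A ∩ B)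
      = ∑ S ∈ B.powerset, #{A ∈ powersetCard k univ | S ⊆ A} := by
  calc ∑ A ∈ powersetCard k univ, 2 ^ #(A ∩ B)
      = ∑ A ∈ powersetCard k univ, ∑ S ∈ B.powerset, if S ⊆ A then 1 else 0 := by
        refine sum_congr rfl fun A _ => ?_
        rw [← card_powerset, ← card_filter]
        congr 1
        ext S
        simp only [mem_powerset, mem_filter, subset_inter_iff]
        tauto
    _ = ∑ S ∈ B.powerset, #{A ∈ powersetCard k univ | S ⊆ A} := by
        rw [sum_comm]
        simp only [card_filter]

theorem sum_powersetCard_two_pow_card_inter_le (B : Finset α) (k : ℕ) :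
    ∑ A ∈ powersetCard k univ, (2 : ℝ) ^ #(A ∩ B)
      ≤ (1 + (#B : ℝ) / Fintype.card α) ^ k * (Fintype.card α).choose k := by
  set s := Fintype.card α
  have hBs : #B ≤ s := card_le_univ B
  have hchoose_pos : ∀ j ≤ #B, (0 : ℝ) < s.choose j := fun j hj =>
    by exact_mod_cast Nat.choose_pos (hj.trans hBs)
  calc ∑ A ∈ powersetCard k univ, (2 : ℝ) ^ #(A ∩ B)
      = ∑ S ∈ B.powerset, (#{A ∈ powersetCard k univ | S ⊆ A} : ℝ) := by
        exact_mod_cast sum_powersetCard_two_pow_card_inter_eq B k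
    _ ≤ ∑ S ∈ B.powerset, (s.choose k * k.choose #S / s.choose #S : ℝ) := by
        refine sum_le_sum fun S hS => ?_
        rw [le_div_iff₀ (hchoose_pos _ (card_le_card (mem_powerset.1 hS)))]
        exact_mod_cast card_powersetCard_filter_superset_mul_choose_le S k
    _ = ∑ j ∈ range (#B + 1), (#B).choose j * (s.choose k * k.choose j / s.choose j : ℝ) := by
        rw [sum_powerset_apply_card fun j => (s.choose k * k.choose j / s.choose j : ℝ)]
        simp only [nsmul_eq_mul]
    _ ≤ ∑ j ∈ range (#B + 1), s.choose k * (k.choose j * ((#B : ℝ) / s) ^ j) := by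
        refine sum_le_sum fun j hj => ?_
        have hj' := hchoose_pos j (Nat.lt_succ_iff.1 (mem_range.1 hj))
        calc ((#B).choose j : ℝ) * (s.choose k * k.choose j / s.choose j)
            ≤ s.choose j * ((#B : ℝ) / s) ^ j * (s.choose k * k.choose j / s.choose j) := by
              gcongr
              exact Nat.cast_choose_le_cast_choose_mul_div_pow hBs j
          _ = s.choose k * (k.choose j * ((#B : ℝ) / s) ^ j) := by
              field_simp
    _ ≤ s.choose k * (1 + (#B : ℝ) / s) ^ k := by
        rw [← mul_sum]
        gcongr
        exact sum_range_choose_mul_pow_le (by positivity) k _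
    _ = (1 + (#B : ℝ) / s) ^ k * s.choose k := mul_comm _ _

theorem card_powersetCard_filter_half_le_card_inter_le (B : Finset α) (hB : 3 * #B ≤ Fintype.card α)
    (k : ℕ) :
    (#{A ∈ powersetCard k univ | (k : ℝ) / 2 ≤ #(A ∩ B)} : ℝ)
      ≤ √(8 / 9) ^ k * (Fintype.card α).choose k := by
  set heavy : Finset (Finset α) := {A ∈ powersetCard k univ | (k : ℝ) / 2 ≤ #(A ∩ B)}
  have hsqrt : √(8 / 9) * √2 = 4 / 3 := by
    rw [← Real.sqrt_mul (by norm_num), show (8 / 9 * 2 : ℝ) = (4 / 3) ^ 2 by norm_num,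
      Real.sqrt_sq (by norm_num)]
  have hratio : 1 + (#B : ℝ) / Fintype.card α ≤ 4 / 3 := by
    have : (#B : ℝ) / Fintype.card α ≤ 1 / 3 :=
      div_le_of_le_mul₀ (by positivity) (by norm_num) (by
        have : (3 * #B : ℝ) ≤ Fintype.card α := by exact_mod_cast hB
        linarith)
    linarith
  have hheavy : ∀ A ∈ heavy, √2 ^ k ≤ (2 : ℝ) ^ #(A ∩ B) := fun A hA => by
    have hk : k ≤ 2 * #(A ∩ B) := by
      have := (mem_filter.1 hA).2
      exact_mod_cast (by linarith : (k : ℝ) ≤ 2 * #(A ∩ B))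
    calc √2 ^ k ≤ √2 ^ (2 * #(A ∩ B)) :=
          pow_le_pow_right₀ (Real.one_le_sqrt.2 (by norm_num)) hk
      _ = (2 : ℝ) ^ #(A ∩ B) := by rw [pow_mul, Real.sq_sqrt (by norm_num)]
  refine le_of_mul_le_mul_right ?_ (by positivity : (0 : ℝ) < √2 ^ k)
  calc (#heavy : ℝ) * √2 ^ k = ∑ A ∈ heavy, √2 ^ k := by rw [sum_const, nsmul_eq_mul]
    _ ≤ ∑ A ∈ heavy, (2 : ℝ) ^ #(A ∩ B) := sum_le_sum hheavy
    _ ≤ ∑ A ∈ powersetCard k univ, (2 : ℝ) ^ #(A ∩ B) :=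
        sum_le_sum_of_subset_of_nonneg (filter_subset _ _) fun _ _ _ => by positivity
    _ ≤ (1 + (#B : ℝ) / Fintype.card α) ^ k * (Fintype.card α).choose k :=
        sum_powersetCard_two_pow_card_inter_le B k
    _ ≤ (4 / 3) ^ k * (Fintype.card α).choose k := by gcongr
    _ = √(8 / 9) ^ k * (Fintype.card α).choose k * √2 ^ k := by
        rw [← hsqrt, mul_pow]; ring

end PowersetCard

section PiFinset

variable {ι β : Type*} [Fintype ι] [DecidableEq ι]

theorem card_piFinset_filter_forall_mem (𝒜 : Finset β) (P : β → Prop) [DecidablePred P]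
    (T : Finset ι) :
    #{N ∈ Fintype.piFinset (fun _ : ι => 𝒜) | ∀ i ∈ T, P (N i)}
      = #{A ∈ 𝒜 | P A} ^ #T * #𝒜 ^ (Fintype.card ι - #T) := by
  have hpi : {N ∈ Fintype.piFinset (fun _ : ι => 𝒜) | ∀ i ∈ T, P (N i)}
      = Fintype.piFinset (fun i => if i ∈ T then {A ∈ 𝒜 | P A} else 𝒜) := by
    ext N
    simp only [mem_filter, Fintype.mem_piFinset]
    refine ⟨fun h i => ?_, fun h => ⟨fun i => ?_, fun i hi => ?_⟩⟩
    · split_ifs with hi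
      exacts [mem_filter.2 ⟨h.1 i, h.2 i hi⟩, h.1 i]
    · have := h i
      split_ifs at this
      exacts [(mem_filter.1 this).1, this]
    · exact (by simpa [hi] using h i : _ ∧ _).2
  rw [hpi, Fintype.card_piFinset]
  simp only [apply_ite card, prod_ite, prod_const, filter_mem_eq_inter, univ_inter,
    filter_notMem_eq_sdiff, card_univ_sdiff]

theorem card_piFinset_filter_le_choose_mul (𝒜 : Finset β) (P : β → Prop) [DecidablePred P]
    (d : ℕ) :
    #{N ∈ Fintype.piFinset (fun _ : ι => 𝒜) | d ≤ #{i | P (N i)}} * #𝒜 ^ d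
      ≤ (Fintype.card ι).choose d * #{A ∈ 𝒜 | P A} ^ d * #𝒜 ^ Fintype.card ι := by
  set Ω := Fintype.piFinset (fun _ : ι => 𝒜)
  have hcover : {N ∈ Ω | d ≤ #{i | P (N i)}}
      ⊆ (powersetCard d univ).biUnion fun T => {N ∈ Ω | ∀ i ∈ T, P (N i)} := by
    intro N hN
    rw [mem_filter] at hN
    obtain ⟨T, hT, hTd⟩ := exists_subset_card_eq hN.2
    exact mem_biUnion.2 ⟨T, mem_powersetCard.2 ⟨subset_univ T, hTd⟩,
      mem_filter.2 ⟨hN.1, fun i hi => (mem_filter.1 (hT hi)).2⟩⟩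
  calc #{N ∈ Ω | d ≤ #{i | P (N i)}} * #𝒜 ^ d
      ≤ (∑ T ∈ powersetCard d univ, #{N ∈ Ω | ∀ i ∈ T, P (N i)}) * #𝒜 ^ d :=
        Nat.mul_le_mul_right _ ((card_le_card hcover).trans card_biUnion_le)
    _ = ∑ T ∈ powersetCard d (univ : Finset ι), #{A ∈ 𝒜 | P A} ^ d * #𝒜 ^ Fintype.card ι := by
        rw [sum_mul]
        refine sum_congr rfl fun T hT => ?_
        obtain ⟨-, hTd⟩ := mem_powersetCard.1 hT
        have hdn : d ≤ Fintype.card ι := hTd ▸ card_le_univ T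
        rw [card_piFinset_filter_forall_mem, hTd, mul_assoc, ← pow_add, Nat.sub_add_cancel hdn]
    _ = _ := by rw [sum_const, card_powersetCard, card_univ, smul_eq_mul, mul_assoc]

end PiFinset

theorem exists_forall_not_of_sum_card_filter_lt {β γ : Type*} (𝓑 : Finset γ) (Ω : Finset β)
    (bad : γ → β → Prop) [∀ B, DecidablePred (bad B)]
    (h : ∑ B ∈ 𝓑, #{x ∈ Ω | bad B x} < #Ω) : ∃ x ∈ Ω, ∀ B ∈ 𝓑, ¬ bad B x := by
  by_contra! hbad
  have hcover : Ω ⊆ 𝓑.biUnion fun B => {x ∈ Ω | bad B x} := fun x hx => by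
    obtain ⟨B, hB, hxB⟩ := hbad x hx
    exact mem_biUnion.2 ⟨B, hB, mem_filter.2 ⟨hx, hxB⟩⟩
  exact ((card_le_card hcover).trans card_biUnion_le).not_gt h

theorem log_sqrt_eight_ninths_lt : Real.log √(8 / 9) < -1 / 30 := by
  rw [Real.log_sqrt (by norm_num)]
  have : Real.log (8 / 9) < -1 / 15 := by
    rw [Real.log_lt_iff_lt_exp (by norm_num)]
    linarith [Real.add_one_le_exp (-1 / 15 : ℝ)]
  linarith

theorem two_pow_mul_pow_mul_sqrt_pow_lt_one {n d s Δ : ℕ} (hn : 1 ≤ n) (hd : 1 ≤ d) (hs : 1 ≤ s)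
    (hΔ : 30 * ((s : ℝ) * Real.log 2 / d + Real.log n) ≤ Δ) :
    2 ^ s * (n : ℝ) ^ d * (√(8 / 9) ^ Δ) ^ d < 1 := by
  have hd' : (0 : ℝ) < d := by exact_mod_cast hd
  have hR : 0 < (s : ℝ) * Real.log 2 + d * Real.log n := by
    have : (1 : ℝ) ≤ s := by exact_mod_cast hs
    have := Real.log_pos (by norm_num : (1 : ℝ) < 2)
    have := Real.log_nonneg (by exact_mod_cast hn : (1 : ℝ) ≤ n)
    positivity
  have hdΔ : 30 * ((s : ℝ) * Real.log 2 + d * Real.log n) ≤ d * Δ := by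
    have := mul_le_mul_of_nonneg_left hΔ hd'.le
    rwa [mul_left_comm, mul_add, mul_div_cancel₀ _ hd'.ne'] at this
  rw [← Real.log_neg_iff (by positivity), Real.log_mul (by positivity) (by positivity),
    Real.log_mul (by positivity) (by positivity), Real.log_pow, Real.log_pow, Real.log_pow,
    Real.log_pow]
  nlinarith [log_sqrt_eight_ninths_lt]

theorem card_piFinset_filter_many_heavy_le {α ι : Type*} [Fintype α] [DecidableEq α]
    [Fintype ι] [DecidableEq ι] (B : Finset α) (hB : 3 * #B ≤ Fintype.card α) {k : ℕ}
    (hk : k ≤ Fintype.card α) (d : ℕ) :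
    (#{N ∈ Fintype.piFinset (fun _ : ι => powersetCard k univ) |
        d ≤ #{i | (k : ℝ) / 2 ≤ #(N i ∩ B)}} : ℝ)
      ≤ (Fintype.card ι : ℝ) ^ d * (√(8 / 9) ^ k) ^ d
          * ((Fintype.card α).choose k : ℝ) ^ Fintype.card ι := by
  set K := (Fintype.card α).choose k
  have hK : (0 : ℝ) < K := by exact_mod_cast Nat.choose_pos hk
  have hcount := card_piFinset_filter_le_choose_mul (ι := ι) (powersetCard k univ)
    (fun A => (k : ℝ) / 2 ≤ #(A ∩ B)) d
  rw [card_powersetCard, card_univ] at hcount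
  refine le_of_mul_le_mul_right ?_ (pow_pos hK d)
  calc _ ≤ ((Fintype.card ι).choose d : ℝ) * #{A ∈ powersetCard k univ | (k : ℝ) / 2 ≤ #(A ∩ B)} ^ d
          * (K : ℝ) ^ Fintype.card ι := by exact_mod_cast hcount
    _ ≤ (Fintype.card ι : ℝ) ^ d * (√(8 / 9) ^ k * K) ^ d * (K : ℝ) ^ Fintype.card ι := by
        gcongr
        · exact_mod_cast Nat.choose_le_pow _ _
        · exact card_powersetCard_filter_half_le_card_inter_le B hB k
    _ = _ := by ring

theorem exists_sparse_of_thirty_mul_le {n d s Δ : ℕ} (hn : 1 ≤ n) (hd : 1 ≤ d) (hs : 1 ≤ s)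
    (hΔs : Δ ≤ s) (hΔ : 30 * ((s : ℝ) * Real.log 2 / d + Real.log n) ≤ Δ) :
    ∃ N : Fin n → Finset (Fin s), (∀ i, #(N i) = Δ) ∧
      ∀ B : Finset (Fin s), (#B : ℝ) < s / 3 → (#{i | (Δ : ℝ) / 2 ≤ #(N i ∩ B)} : ℝ) < d := by
  set Ω := Fintype.piFinset fun _ : Fin n => powersetCard Δ (univ : Finset (Fin s))
  set small : Finset (Finset (Fin s)) := {B | (#B : ℝ) < s / 3}
  have hK : (0 : ℝ) < s.choose Δ := by exact_mod_cast Nat.choose_pos hΔs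
  have hsmall : (#small : ℝ) ≤ 2 ^ s := by
    exact_mod_cast (card_le_univ small).trans_eq (by simp)
  have hcount : (∑ B ∈ small, #{N ∈ Ω | d ≤ #{i | (Δ : ℝ) / 2 ≤ #(N i ∩ B)}} : ℝ) < #Ω :=
    calc (∑ B ∈ small, #{N ∈ Ω | d ≤ #{i | (Δ : ℝ) / 2 ≤ #(N i ∩ B)}} : ℝ)
        ≤ ∑ B ∈ small, (n : ℝ) ^ d * (√(8 / 9) ^ Δ) ^ d * (s.choose Δ : ℝ) ^ n := by
          refine sum_le_sum fun B hB => ?_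
          have hB : 3 * #B ≤ s := by
            have := (mem_filter.1 hB).2
            exact_mod_cast (by linarith : (3 * #B : ℝ) ≤ s)
          simpa using card_piFinset_filter_many_heavy_le (ι := Fin n) B (by simpa) (by simpa) d
      _ ≤ 2 ^ s * ((n : ℝ) ^ d * (√(8 / 9) ^ Δ) ^ d * (s.choose Δ : ℝ) ^ n) := by
          rw [sum_const, nsmul_eq_mul]
          gcongr
      _ < 1 * (s.choose Δ : ℝ) ^ n := by
          rw [← mul_assoc, ← mul_assoc]
          gcongr
          exact two_pow_mul_pow_mul_sqrt_pow_lt_one hn hd hs hΔ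
      _ = #Ω := by simp [Ω]
  obtain ⟨N, hNΩ, hN⟩ := exists_forall_not_of_sum_card_filter_lt small Ω
    (fun B N => d ≤ #{i | (Δ : ℝ) / 2 ≤ #(N i ∩ B)}) (by exact_mod_cast hcount)
  refine ⟨N, fun i => (mem_powersetCard.1 (Fintype.mem_piFinset.1 hNΩ i)).2, fun B hB => ?_⟩
  exact_mod_cast not_le.1 (hN B (mem_filter.2 ⟨mem_univ B, hB⟩))

theorem exists_sparse_bipartite_graph_general (n d s : ℕ) (hn : 1 ≤ n) (hd : 1 ≤ d)
    (hs1 : 1 ≤ s) :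
    ∀ Δ : ℕ, Δ = min ⌈(2 * (s : ℝ)) / 3⌉₊
        ⌈30 * (((s : ℝ) * Real.log 2) / (d : ℝ) + Real.log n)⌉₊ →
      ∃ N : Fin n → Finset (Fin s),
        (∀ i : Fin n, (N i).card = Δ) ∧
        ∀ B : Finset (Fin s), (B.card : ℝ) < (s : ℝ) / 3 →
          ((Finset.univ.filter
              (fun i : Fin n => ((Δ : ℝ) / 2 ≤ ((N i ∩ B).card : ℝ)))).card : ℝ) < d := by
  intro Δ hΔ
  have hceil : ⌈(2 * (s : ℝ)) / 3⌉₊ ≤ s := Nat.ceil_le.2 (by linarith [s.cast_nonneg (α := ℝ)])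
  have hΔs : Δ ≤ s := hΔ ▸ (min_le_left _ _).trans hceil
  by_cases hlarge : (s : ℝ) / 3 ≤ Δ / 2
  · obtain ⟨A, -, hA⟩ := exists_subset_card_eq (show Δ ≤ #(univ : Finset (Fin s)) by simpa)
    refine ⟨fun _ => A, fun _ => hA, fun B hB => ?_⟩
    have hAB : (#(A ∩ B) : ℝ) ≤ #B := by exact_mod_cast card_le_card inter_subset_right
    rw [filter_false_of_mem fun i _ => not_le.2 (by linarith), card_empty, Nat.cast_zero]
    exact_mod_cast hd
  · have hlt : Δ < ⌈(2 * (s : ℝ)) / 3⌉₊ := by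
      exact_mod_cast (by linarith [Nat.le_ceil ((2 * (s : ℝ)) / 3)] :
        (Δ : ℝ) < ⌈(2 * (s : ℝ)) / 3⌉₊)
    refine exists_sparse_of_thirty_mul_le hn hd hs1 hΔs ?_
    rw [show Δ = ⌈30 * (((s : ℝ) * Real.log 2) / (d : ℝ) + Real.log n)⌉₊ by omega]
    exact Nat.le_ceil _

/-- Existence of a sparse bipartite graph (Lemma "sparselemma"): for `n, d ≥ 1` and
`1 ≤ s ≤ n`, with `Δ = min(⌈2s/3⌉, ⌈30((s ln 2)/d + ln n)⌉)`, there is an assignment of a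
`Δ`-element neighborhood `N(vᵢ) ⊆ Q` (`|Q| = s`) to each of `n` vertices such that for every
`B ⊆ Q` with `|B| < s/3`, fewer than `d` vertices have at least `Δ/2` neighbors in `B`. -/
theorem exists_sparse_bipartite_graph (n d s : ℕ) (hn : 1 ≤ n) (hd : 1 ≤ d)
    (hs1 : 1 ≤ s) (hsn : s ≤ n) :
    ∀ Δ : ℕ, Δ = min ⌈(2 * (s : ℝ)) / 3⌉₊
        ⌈30 * (((s : ℝ) * Real.log 2) / (d : ℝ) + Real.log n)⌉₊ →
      ∃ N : Fin n → Finset (Fin s),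
        (∀ i : Fin n, (N i).card = Δ) ∧
        ∀ B : Finset (Fin s), (B.card : ℝ) < (s : ℝ) / 3 →
          ((Finset.univ.filter
              (fun i : Fin n => ((Δ : ℝ) / 2 ≤ ((N i ∩ B).card : ℝ)))).card : ℝ) < d :=
  exists_sparse_bipartite_graph_general n d s hn hd hs1
end

section
/- For all integers n ≥ 1 and q ≥ 1, every integer c with 1 ≤ c ≤ q, and all real numbers ε, α with 0 < ε < α ≤ 1/3, setting s = min(n, ⌈((2α − ε)/ε²)·((n·ln 2)/c + ln q)⌉), there exists a list of q subsets Q_1, …, Q_q of {1,…,n}, each of size exactly s, such that for every subset B ⊆ {1,…,n} with |B| ≤ (α − ε)·n, the number of indices i ∈ {1,…,q} with |Q_i ∩ B| ≥ α·s is strictly less than c. -/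
/-!
For a fixed `B` with `|B| ≤ (α - ε) n`, the intersection size `|Q ∩ B|` of a uniformly random
`s`-set `Q` is hypergeometric, and its moment generating function is dominated by the binomial
one: `E[λ^|Q ∩ B|] ≤ (1 + (α - ε)(λ - 1))^s`. Markov's inequality at `λ = α / (α - ε)` then gives
`P(|Q ∩ B| ≥ α s) < p := exp(-ε² s / (2α - ε))`. For independent uniform committees
`Q₁, …, Q_q`, a fixed `B` captures `c` prescribed committees with probability `< p^c`, so a union
bound over at most `2^n` sets `B` and `C(q, c) ≤ q^c` sets of indices leaves a good choice as soon
as `2^n q^c p^c ≤ 1`, which is exactly what the choice of `s` guarantees. When `s = n` every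
committee is all of `[n]` and `|B| < α n` directly.
-/

open Finset Real

namespace Nat

theorem descFactorial_mul_pow_le_descFactorial_mul_pow_s4 {b n : ℕ} (h : b ≤ n) (r : ℕ) :
    b.descFactorial r * n ^ r ≤ n.descFactorial r * b ^ r := by
  induction r with
  | zero => simp
  | succ r ih =>
    have hstep : (b - r) * n ≤ (n - r) * b := by
      rw [Nat.sub_mul, Nat.sub_mul, Nat.mul_comm b n]
      exact Nat.sub_le_sub_left (Nat.mul_le_mul_left r h) _
    calc b.descFactorial (r + 1) * n ^ (r + 1)
        = ((b - r) * n) * (b.descFactorial r * n ^ r) := by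
          rw [descFactorial_succ, pow_succ]; ring
      _ ≤ ((n - r) * b) * (n.descFactorial r * b ^ r) := Nat.mul_le_mul hstep ih
      _ = n.descFactorial (r + 1) * b ^ (r + 1) := by
          rw [descFactorial_succ, pow_succ]; ring

theorem choose_mul_pow_le_choose_mul_pow_s4 {b n : ℕ} (h : b ≤ n) (r : ℕ) :
    b.choose r * n ^ r ≤ n.choose r * b ^ r := by
  have := descFactorial_mul_pow_le_descFactorial_mul_pow_s4 h r
  rw [descFactorial_eq_factorial_mul_choose, descFactorial_eq_factorial_mul_choose,
    Nat.mul_assoc, Nat.mul_assoc] at this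
  exact Nat.le_of_mul_le_mul_left this r.factorial_pos

theorem cast_choose_le_pow_mul_cast_choose {b n : ℕ} (h : b ≤ n) {β : ℝ}
    (hb : (b : ℝ) ≤ β * n) (r : ℕ) : (b.choose r : ℝ) ≤ β ^ r * n.choose r := by
  rcases Nat.eq_zero_or_pos n with rfl | hn
  · obtain rfl : b = 0 := Nat.le_zero.1 h
    cases r <;> simp
  have hcast : (b.choose r : ℝ) * n ^ r ≤ n.choose r * b ^ r := by
    exact_mod_cast choose_mul_pow_le_choose_mul_pow_s4 h r
  refine le_of_mul_le_mul_right ?_ (pow_pos (Nat.cast_pos.2 hn) r)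
  calc (b.choose r : ℝ) * n ^ r ≤ n.choose r * b ^ r := hcast
    _ ≤ n.choose r * (β * n) ^ r := by gcongr
    _ = β ^ r * n.choose r * n ^ r := by ring

end Nat

theorem sq_div_lt_mul_log_div_sub_log_one_add {ε α : ℝ} (hε : 0 < ε) (hεα : ε < α) :
    ε ^ 2 / (2 * α - ε) < α * log (α / (α - ε)) - log (1 + ε) := by
  have hβ : 0 < α - ε := by linarith
  have h2 : 0 < 2 * α - ε := by linarith
  have hlog : 2 * ε / (2 * α - ε) ≤ log (α / (α - ε)) := by
    have h := le_log_one_add_of_nonneg (div_nonneg hε.le hβ.le)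
    rwa [one_add_div hβ.ne', sub_add_cancel, div_add' _ _ _ hβ.ne', ← mul_div_assoc,
      div_div_div_cancel_right₀ hβ.ne', show ε + 2 * (α - ε) = 2 * α - ε by ring] at h
  have hlog1 : log (1 + ε) < ε := by
    linarith [log_lt_sub_one_of_pos (x := 1 + ε) (by linarith) (by linarith)]
  have hα : 0 ≤ α := by linarith
  calc ε ^ 2 / (2 * α - ε) = α * (2 * ε / (2 * α - ε)) - ε := by field_simp; ring
    _ < α * log (α / (α - ε)) - log (1 + ε) := by nlinarith [mul_le_mul_of_nonneg_left hlog hα]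

theorem one_add_pow_eq_sum_range_choose {R : Type*} [CommSemiring R] (x : R) {m s : ℕ}
    (hms : m ≤ s) : (1 + x) ^ m = ∑ r ∈ range (s + 1), (m.choose r : R) * x ^ r := by
  calc (1 + x) ^ m = ∑ r ∈ range (m + 1), (m.choose r : R) * x ^ r := by
        rw [add_comm, add_pow]
        exact sum_congr rfl fun r _ => by ring
    _ = ∑ r ∈ range (s + 1), (m.choose r : R) * x ^ r :=
        sum_subset (range_subset_range.2 (by omega)) fun r _ hr => by
          rw [Nat.choose_eq_zero_of_lt (by simpa using hr), Nat.cast_zero, zero_mul]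

section Hypergeometric

variable {V : Type*} [Fintype V] [DecidableEq V]

theorem sum_choose_card_inter (B : Finset V) {s r : ℕ} (hrs : r ≤ s) :
    ∑ Q ∈ powersetCard s univ, (#(Q ∩ B)).choose r
      = (#B).choose r * (Fintype.card V - r).choose (s - r) := by
  have hsub : ∀ Q : Finset V, (#(Q ∩ B)).choose r = #{T ∈ powersetCard r B | T ⊆ Q} := by
    intro Q
    rw [← card_powersetCard]
    congr 1
    ext T
    simp only [mem_powersetCard, mem_filter, subset_inter_iff]
    tauto
  simp_rw [hsub]
  refine (sum_card_bipartiteAbove_eq_sum_card_bipartiteBelow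
    (fun (Q T : Finset V) => T ⊆ Q)).trans ?_
  rw [← card_powersetCard r B, ← smul_eq_mul, ← sum_const]
  refine sum_congr rfl fun T hT => ?_
  rw [mem_powersetCard] at hT
  rw [bipartiteBelow, card_filter_powersetCard_subset T univ s (subset_univ T) (hT.2 ▸ hrs),
    card_univ, hT.2]

theorem sum_one_add_pow_card_inter_le (B : Finset V) (s : ℕ) {β x : ℝ} (hx : 0 ≤ x)
    (hB : (#B : ℝ) ≤ β * Fintype.card V) :
    ∑ Q ∈ powersetCard s univ, (1 + x) ^ #(Q ∩ B)
      ≤ (Fintype.card V).choose s * (1 + β * x) ^ s := by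
  set n := Fintype.card V
  have hexpand : ∀ Q ∈ powersetCard s univ,
      (1 + x) ^ #(Q ∩ B) = ∑ r ∈ range (s + 1), ((#(Q ∩ B)).choose r : ℝ) * x ^ r :=
    fun Q hQ => one_add_pow_eq_sum_range_choose x
      ((card_le_card inter_subset_left).trans (mem_powersetCard.1 hQ).2.le)
  have hterm : ∀ r ∈ range (s + 1),
      ∑ Q ∈ powersetCard s univ, ((#(Q ∩ B)).choose r : ℝ) * x ^ r
        ≤ n.choose s * ((s.choose r : ℝ) * (β * x) ^ r) := by
    intro r hr
    have hrs : r ≤ s := Nat.lt_succ_iff.1 (mem_range.1 hr)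
    rw [← sum_mul, ← Nat.cast_sum, sum_choose_card_inter B hrs, Nat.cast_mul]
    calc ((#B).choose r : ℝ) * (n - r).choose (s - r) * x ^ r
        ≤ β ^ r * n.choose r * (n - r).choose (s - r) * x ^ r := by
          gcongr
          exact Nat.cast_choose_le_pow_mul_cast_choose (card_le_univ B) hB r
      _ = n.choose s * ((s.choose r : ℝ) * (β * x) ^ r) := by
          rw [mul_assoc _ (n.choose r : ℝ), ← Nat.cast_mul, ← Nat.choose_mul hrs, Nat.cast_mul]
          ring
  calc ∑ Q ∈ powersetCard s univ, (1 + x) ^ #(Q ∩ B)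
      = ∑ r ∈ range (s + 1),
          ∑ Q ∈ powersetCard s univ, ((#(Q ∩ B)).choose r : ℝ) * x ^ r := by
        rw [sum_congr rfl hexpand, sum_comm]
    _ ≤ ∑ r ∈ range (s + 1), n.choose s * ((s.choose r : ℝ) * (β * x) ^ r) := sum_le_sum hterm
    _ = n.choose s * (1 + β * x) ^ s := by
        rw [← mul_sum, one_add_pow_eq_sum_range_choose _ le_rfl]

theorem card_powersetCard_filter_le_card_inter_lt (B : Finset V) {s : ℕ} (hs : 0 < s)
    (hsV : s ≤ Fintype.card V) {ε α : ℝ} (hε : 0 < ε) (hεα : ε < α)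
    (hB : (#B : ℝ) ≤ (α - ε) * Fintype.card V) :
    (#{Q ∈ powersetCard s univ | α * s ≤ #(Q ∩ B)} : ℝ)
      < (Fintype.card V).choose s * exp (-(ε ^ 2 / (2 * α - ε)) * s) := by
  set n := Fintype.card V
  have hβ : 0 < α - ε := by linarith
  set lam := α / (α - ε) with hlam_def
  have hlam : 1 ≤ lam := (one_le_div hβ).2 (by linarith)
  have hmarkov : #{Q ∈ powersetCard s univ | α * s ≤ #(Q ∩ B)} * exp (α * s * log lam)
      ≤ n.choose s * (1 + ε) ^ s := by
    have hmgf := sum_one_add_pow_card_inter_le B s (sub_nonneg.2 hlam) hB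
    rw [add_sub_cancel, show (α - ε) * (lam - 1) = ε by rw [hlam_def]; field_simp; ring] at hmgf
    refine le_trans ?_ ((sum_le_sum_of_subset_of_nonneg
      (filter_subset (fun Q : Finset V => α * s ≤ #(Q ∩ B)) _)
      fun _ _ _ => by positivity).trans hmgf)
    rw [← nsmul_eq_mul]
    refine card_nsmul_le_sum _ _ _ fun Q hQ => ?_
    rw [← exp_log (by positivity : 0 < lam ^ #(Q ∩ B)), log_pow, exp_le_exp]
    exact mul_le_mul_of_nonneg_right (mem_filter.1 hQ).2 (log_nonneg hlam)
  have hgap : (1 + ε) ^ s < exp (-(ε ^ 2 / (2 * α - ε)) * s) * exp (α * s * log lam) := by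
    rw [← exp_add, ← exp_log (by positivity : 0 < 1 + ε), ← exp_nat_mul, exp_lt_exp]
    nlinarith [sq_div_lt_mul_log_div_sub_log_one_add hε hεα, (Nat.cast_pos.2 hs : (0 : ℝ) < s)]
  have hchoose : (0 : ℝ) < n.choose s := Nat.cast_pos.2 (Nat.choose_pos hsV)
  refine lt_of_mul_lt_mul_right ?_ (exp_pos (α * s * log lam)).le
  calc _ ≤ n.choose s * (1 + ε) ^ s := hmarkov
    _ < _ := by rw [mul_assoc]; exact mul_lt_mul_of_pos_left hgap hchoose

end Hypergeometric

theorem card_piFinset_filter_le_choose_mul_s4 {ι α : Type*} [Fintype ι] [DecidableEq ι]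
    [DecidableEq α] (𝒮 𝒜 : Finset α) (c : ℕ) :
    #{f ∈ Fintype.piFinset fun _ : ι => 𝒮 | c ≤ #{i | f i ∈ 𝒜}}
      ≤ (Fintype.card ι).choose c * (#𝒜 ^ c * #𝒮 ^ (Fintype.card ι - c)) := by
  calc _ ≤ #((powersetCard c univ).biUnion
          fun S => Fintype.piFinset fun i => if i ∈ S then 𝒜 else 𝒮) := by
        refine card_le_card fun f hf => ?_
        obtain ⟨hf𝒮, hc⟩ := mem_filter.1 hf
        obtain ⟨S, hS, hSc⟩ := exists_subset_card_eq hc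
        refine mem_biUnion.2 ⟨S, mem_powersetCard.2 ⟨subset_univ S, hSc⟩,
          Fintype.mem_piFinset.2 fun i => ?_⟩
        split_ifs with hi
        · exact (mem_filter.1 (hS hi)).2
        · exact Fintype.mem_piFinset.1 hf𝒮 i
    _ ≤ ∑ S ∈ powersetCard c univ, #(Fintype.piFinset fun i => if i ∈ S then 𝒜 else 𝒮) :=
        card_biUnion_le
    _ = ∑ S ∈ powersetCard c (univ : Finset ι), #𝒜 ^ c * #𝒮 ^ (Fintype.card ι - c) := by
        refine sum_congr rfl fun S hS => ?_
        rw [mem_powersetCard] at hS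
        rw [Fintype.card_piFinset, prod_apply_ite, prod_const, prod_const, filter_mem_eq_inter,
          univ_inter, filter_notMem_eq_sdiff, card_sdiff_of_subset hS.1, card_univ, hS.2]
    _ = _ := by rw [sum_const, card_powersetCard, card_univ, smul_eq_mul]

theorem exists_forall_card_filter_mem_lt {ι α β : Type*} [Fintype ι] [DecidableEq ι]
    [DecidableEq α] (𝒮 : Finset α) (𝓑 : Finset β) (𝒜 : β → Finset α) {c : ℕ} (hc : c ≠ 0)
    (hcι : c ≤ Fintype.card ι) {p : ℝ}
    (h𝓑 : 𝓑.Nonempty) (h𝒜 : ∀ B ∈ 𝓑, (#(𝒜 B) : ℝ) < #𝒮 * p)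
    (hp : #𝓑 * (Fintype.card ι).choose c * p ^ c ≤ 1) :
    ∃ f : ι → α, (∀ i, f i ∈ 𝒮) ∧ ∀ B ∈ 𝓑, #{i | f i ∈ 𝒜 B} < c := by
  set q := Fintype.card ι
  set T := Fintype.piFinset fun _ : ι => 𝒮
  by_contra! hbad
  have hcover : T ⊆ 𝓑.biUnion fun B => {f ∈ T | c ≤ #{i | f i ∈ 𝒜 B}} := fun f hf => by
    obtain ⟨B, hB, hcB⟩ := hbad f (Fintype.mem_piFinset.1 hf)
    exact mem_biUnion.2 ⟨B, hB, mem_filter.2 ⟨hf, hcB⟩⟩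
  have hT : (#T : ℝ) = #𝒮 ^ q := by simp [T, q]
  have hchoose : (0 : ℝ) < q.choose c := Nat.cast_pos.2 (Nat.choose_pos hcι)
  have hfiber : ∀ B ∈ 𝓑,
      (#{f ∈ T | c ≤ #{i | f i ∈ 𝒜 B}} : ℝ) < q.choose c * p ^ c * #𝒮 ^ q := by
    intro B hB
    have h𝒮p : 0 < (#𝒮 : ℝ) * p := (Nat.cast_nonneg _).trans_lt (h𝒜 B hB)
    have h𝒮 : (0 : ℝ) < #𝒮 :=
      (Nat.cast_nonneg _).lt_of_ne fun h => by rw [← h, zero_mul] at h𝒮p; exact h𝒮p.false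
    calc (#{f ∈ T | c ≤ #{i | f i ∈ 𝒜 B}} : ℝ)
        ≤ q.choose c * (#(𝒜 B) ^ c * #𝒮 ^ (q - c)) := by
          exact_mod_cast card_piFinset_filter_le_choose_mul_s4 𝒮 (𝒜 B) c
      _ < q.choose c * ((#𝒮 * p) ^ c * #𝒮 ^ (q - c)) := by
          gcongr
          exact h𝒜 B hB
      _ = q.choose c * p ^ c * #𝒮 ^ q := by
          rw [mul_pow, ← pow_sub_mul_pow _ hcι]; ring
  have hsum : (#T : ℝ) < #𝓑 * (q.choose c * p ^ c * #𝒮 ^ q) := by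
    calc (#T : ℝ) ≤ ∑ B ∈ 𝓑, (#{f ∈ T | c ≤ #{i | f i ∈ 𝒜 B}} : ℝ) := by
          exact_mod_cast (card_le_card hcover).trans card_biUnion_le
      _ < ∑ B ∈ 𝓑, (q.choose c * p ^ c * #𝒮 ^ q : ℝ) := sum_lt_sum_of_nonempty h𝓑 hfiber
      _ = _ := by rw [sum_const, nsmul_eq_mul]
  have hle : #𝓑 * (q.choose c * p ^ c * #𝒮 ^ q : ℝ) ≤ #T := by
    rw [hT, ← mul_assoc, ← mul_assoc]
    exact mul_le_of_le_one_left (by positivity) hp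
  exact (hsum.trans_le hle).false

theorem two_pow_mul_pow_mul_exp_pow_le_one {n q c : ℕ} (hq : 0 < q) (hc : 0 < c) {δ x : ℝ}
    (hδ : 0 < δ) (hx : δ⁻¹ * (n * log 2 / c + log q) ≤ x) :
    2 ^ n * q ^ c * exp (-δ * x) ^ c ≤ 1 := by
  have hc' : (0 : ℝ) < c := Nat.cast_pos.2 hc
  have hkey : n * log 2 + c * log q ≤ c * (δ * x) := by
    calc n * log 2 + c * log q = c * (δ * (δ⁻¹ * (n * log 2 / c + log q))) := by
          field_simp
      _ ≤ c * (δ * x) := by gcongr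
  rw [← exp_log (by positivity : (0 : ℝ) < 2 ^ n * q ^ c), ← exp_nat_mul, ← exp_add,
    exp_le_one_iff, log_mul (by positivity) (by positivity), log_pow, log_pow]
  linarith

theorem exists_good_committees_general (n q c : ℕ) (ε α : ℝ) (hn : 1 ≤ n)
    (hc1 : 1 ≤ c) (hcq : c ≤ q) (hε : 0 < ε) (hεα : ε < α) :
    ∀ s : ℕ, s = min n
        ⌈((2 * α - ε) / ε ^ 2) * (((n : ℝ) * Real.log 2) / (c : ℝ) + Real.log q)⌉₊ →
      ∃ Q : Fin q → Finset (Fin n),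
        (∀ i : Fin q, (Q i).card = s) ∧
        ∀ B : Finset (Fin n), (B.card : ℝ) ≤ (α - ε) * (n : ℝ) →
          ((Finset.univ.filter
              (fun i : Fin q => (α * (s : ℝ) ≤ ((Q i ∩ B).card : ℝ)))).card : ℝ) < c := by
  intro s hs
  set δ := ε ^ 2 / (2 * α - ε)
  have hδ : 0 < δ := div_pos (by positivity) (by linarith)
  rw [← inv_div] at hs
  set x := δ⁻¹ * (n * log 2 / c + log q)
  rcases min_choice n ⌈x⌉₊ with hmin | hmin <;> rw [hmin] at hs
  · refine ⟨fun _ => univ, fun _ => by simp [hs], fun B hB => ?_⟩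
    have hnone : ∀ i ∈ (univ : Finset (Fin q)), ¬ α * s ≤ #(univ ∩ B) := fun _ _ => by
      rw [univ_inter, not_le, hs]
      nlinarith [(Nat.one_le_cast (α := ℝ)).2 hn]
    rw [filter_false_of_mem hnone, card_empty, Nat.cast_zero]
    exact_mod_cast hc1
  have hxpos : 0 < x := by positivity
  have hs0 : 0 < s := hs ▸ Nat.ceil_pos.2 hxpos
  have hsn : s ≤ n := hs ▸ hmin ▸ min_le_left _ _
  have hxs : x ≤ s := hs ▸ Nat.le_ceil x
  set 𝓑 : Finset (Finset (Fin n)) := {B | (#B : ℝ) ≤ (α - ε) * n}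
  have hcaptured : ∀ B ∈ 𝓑, (#{Q ∈ powersetCard s univ | α * s ≤ #(Q ∩ B)} : ℝ)
      < #(powersetCard s (univ : Finset (Fin n))) * exp (-δ * s) := fun B hB => by
    simpa using card_powersetCard_filter_le_card_inter_lt B hs0 (by simpa using hsn) hε hεα
      (by simpa [𝓑] using hB)
  have hunion : (#𝓑 : ℝ) * (Fintype.card (Fin q)).choose c * exp (-δ * s) ^ c ≤ 1 := by
    have h𝓑 : #𝓑 ≤ 2 ^ n := (card_filter_le _ _).trans (by simp)
    calc (#𝓑 : ℝ) * (Fintype.card (Fin q)).choose c * exp (-δ * s) ^ c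
        ≤ 2 ^ n * q ^ c * exp (-δ * s) ^ c := by
          rw [Fintype.card_fin]
          gcongr
          · exact_mod_cast h𝓑
          · exact_mod_cast Nat.choose_le_pow q c
      _ ≤ 1 := two_pow_mul_pow_mul_exp_pow_le_one (by omega) (by omega) hδ hxs
  obtain ⟨Q, hQ, hgood⟩ := exists_forall_card_filter_mem_lt (powersetCard s univ) 𝓑 _
    (by omega) (by simpa using hcq) ⟨∅, by simp [𝓑]; positivity⟩ hcaptured hunion
  refine ⟨Q, fun i => (mem_powersetCard.1 (hQ i)).2, fun B hB => ?_⟩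
  have := hgood B (by simpa [𝓑] using hB)
  simp only [mem_filter, hQ, true_and] at this
  exact_mod_cast this

/-- Committee selection lemma ("comlemma"): for `n, q ≥ 1`, `1 ≤ c ≤ q` and reals
`0 < ε < α ≤ 1/3`, with `s = min(n, ⌈((2α−ε)/ε²)((n ln 2)/c + ln q)⌉)`, there exist `q`
subsets `Q₁, …, Q_q` of `[n]`, each of size `s`, such that for every `B ⊆ [n]` with
`|B| ≤ (α−ε)n`, fewer than `c` indices `i` satisfy `|Qᵢ ∩ B| ≥ αs`. -/
theorem exists_good_committees (n q c : ℕ) (ε α : ℝ) (hn : 1 ≤ n) (hq : 1 ≤ q)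
    (hc1 : 1 ≤ c) (hcq : c ≤ q) (hε : 0 < ε) (hεα : ε < α) (hα : α ≤ 1 / 3) :
    ∀ s : ℕ, s = min n
        ⌈((2 * α - ε) / ε ^ 2) * (((n : ℝ) * Real.log 2) / (c : ℝ) + Real.log q)⌉₊ →
      ∃ Q : Fin q → Finset (Fin n),
        (∀ i : Fin q, (Q i).card = s) ∧
        ∀ B : Finset (Fin n), (B.card : ℝ) ≤ (α - ε) * (n : ℝ) →
          ((Finset.univ.filter
              (fun i : Fin q => (α * (s : ℝ) ≤ ((Q i ∩ B).card : ℝ)))).card : ℝ) < c :=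
  exists_good_committees_general n q c ε α hn hc1 hcq hε hεα
end

section
/- Let n, q, c be integers with n ≥ 1, q ≥ 1 and 1 ≤ c ≤ q, and let ε, α be real numbers with 0 < ε < α ≤ 1/3. Let b = ⌊(α − ε)·n⌋ and assume b ≥ 1, and let s = ⌈((2α − ε)/ε²)·((n·ln 2)/c + ln q)⌉. Then c·s·(α·n − b)² / (n·(α·n + b)) ≥ n·ln 2 + c·ln q. -/
/-!
Write `u = αn − b` and `v = αn + b`. Since `b ≤ (α − ε)n`, the gap satisfies `u ≥ εn` and
`v ≤ (2α − ε)n`. The choice of `s` is exactly what makes `c s (εn)² ≥ (2α − ε)n² T` with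
`T = n ln 2 + c ln q`, so `c s u² / (n v) ≥ c s (εn)² / ((2α − ε)n²) ≥ T`.
-/

theorem le_mul_sq_div_of_gap {c s n u v w ε T : ℝ} (hc : 0 < c) (hε : 0 < ε) (hn : 0 < n)
    (hv : 0 < v) (hT : 0 ≤ T) (hu : ε * n ≤ u) (hvw : v ≤ w * n)
    (hs : w / ε ^ 2 * (T / c) ≤ s) :
    T ≤ c * s * u ^ 2 / (n * v) := by
  have hw : 0 < w := pos_of_mul_pos_left (hv.trans_le hvw) hn.le
  have hs0 : 0 ≤ s := (by positivity : 0 ≤ w / ε ^ 2 * (T / c)).trans hs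
  rw [le_div_iff₀ (by positivity)]
  calc T * (n * v) ≤ T * (w * n) * n := by nlinarith [mul_le_mul_of_nonneg_left hvw hT]
    _ = c * (w / ε ^ 2 * (T / c)) * (ε * n) ^ 2 := by field_simp
    _ ≤ c * s * u ^ 2 := by gcongr

theorem chernoff_exponent_bound_committees_general (n q c : ℕ) (ε α : ℝ) (hn : 1 ≤ n)
    (hc1 : 1 ≤ c) (hε : 0 < ε)
    (b s : ℤ) (hb : b = ⌊(α - ε) * (n : ℝ)⌋) (hb1 : 1 ≤ b)
    (hs : s = ⌈((2 * α - ε) / ε ^ 2) * (((n : ℝ) * Real.log 2) / (c : ℝ) + Real.log q)⌉) :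
    (c : ℝ) * (s : ℝ) * (α * (n : ℝ) - (b : ℝ)) ^ 2 /
        ((n : ℝ) * (α * (n : ℝ) + (b : ℝ)))
      ≥ (n : ℝ) * Real.log 2 + (c : ℝ) * Real.log q := by
  have hn' : (0 : ℝ) < n := by exact_mod_cast hn
  have hc' : (0 : ℝ) < c := by exact_mod_cast hc1
  have hb' : (b : ℝ) ≤ (α - ε) * n := hb ▸ Int.floor_le _
  have hb1' : (1 : ℝ) ≤ b := by exact_mod_cast hb1
  have hT : 0 ≤ (n : ℝ) * Real.log 2 + c * Real.log q := by
    have := Real.log_natCast_nonneg q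
    positivity
  have hsplit : (n : ℝ) * Real.log 2 / c + Real.log q
      = ((n : ℝ) * Real.log 2 + c * Real.log q) / c := by
    field_simp
  refine le_mul_sq_div_of_gap (w := 2 * α - ε) hc' hε hn' (by nlinarith) hT (by linarith)
    (by linarith) ?_
  rw [← hsplit, hs]
  exact Int.le_ceil _

/-- For integers `n, q ≥ 1`, `1 ≤ c ≤ q`, reals `0 < ε < α ≤ 1/3`, with
`b = ⌊(α − ε)n⌋ ≥ 1` and `s = ⌈((2α − ε)/ε²)((n ln 2)/c + ln q)⌉`, we have
`cs(αn − b)²/(n(αn + b)) ≥ n ln 2 + c ln q`. -/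
theorem chernoff_exponent_bound_committees (n q c : ℕ) (ε α : ℝ) (hn : 1 ≤ n)
    (hq : 1 ≤ q) (hc1 : 1 ≤ c) (hcq : c ≤ q) (hε : 0 < ε) (hεα : ε < α)
    (hα : α ≤ 1 / 3) (b s : ℤ) (hb : b = ⌊(α - ε) * (n : ℝ)⌋) (hb1 : 1 ≤ b)
    (hs : s = ⌈((2 * α - ε) / ε ^ 2) * (((n : ℝ) * Real.log 2) / (c : ℝ) + Real.log q)⌉) :
    (c : ℝ) * (s : ℝ) * (α * (n : ℝ) - (b : ℝ)) ^ 2 /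
        ((n : ℝ) * (α * (n : ℝ) + (b : ℝ)))
      ≥ (n : ℝ) * Real.log 2 + (c : ℝ) * Real.log q :=
  chernoff_exponent_bound_committees_general n q c ε α hn hc1 hε b s hb hb1 hs
end

section
/- Let n, q, c be integers with n ≥ 1, q ≥ 1 and 1 ≤ c ≤ q, and let ε, α be real numbers with 0 < ε < α ≤ 1/3. Let b = ⌊(α − ε)·n⌋ and assume b ≥ 1, and let s = ⌈((2α − ε)/ε²)·((n·ln 2)/c + ln q)⌉ and assume s ≤ n. Let T = ∑_{j=⌈α·s⌉}^{s} C(b,j)·C(n−b, s−j). Then T^c · 2^n · q^c ≤ C(n,s)^c. -/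
/-!
`T / C(n,s)` is the upper tail `P(X ≥ αs)` of the hypergeometric count `X = |S ∩ B|`. Its
generating function `E[x^X]` is dominated by the binomial one, `(1 + (x - 1) b/n)^s`: adding one
more element to `S` multiplies `x^X` by `1 + (x - 1)(b - X)/(n - s)` on average, and since `x^X`
and `X` are positively correlated (Chebyshev's sum inequality) while `E X = s b/n`, each step
costs at most the binomial factor. Markov's inequality for `x^X` at the optimal `x` gives the
Chernoff bound `exp (-s D(α ‖ p))` for any `p ≥ b/n`, and with `p = α - ε` the estimate
`log ((1 + t)/(1 - t)) ≥ 2t` yields `D(α ‖ α - ε) ≥ ε²/(2α - ε)`; the choice of `s` turns this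
into `exp (-(n ln 2 / c + ln q))`.
-/

open Finset

theorem Nat.cast_choose_succ_right_eq {R : Type*} [CommRing R] (m k : ℕ) :
    (m.choose (k + 1) : R) * (k + 1) = m.choose k * (m - k) := by
  rcases le_or_gt k m with hk | hk
  · have := congrArg (Nat.cast : ℕ → R) (Nat.choose_succ_right_eq m k)
    push_cast [hk] at this
    exact this
  · simp [Nat.choose_eq_zero_of_lt hk, Nat.choose_eq_zero_of_lt (hk.trans k.lt_succ_self)]

theorem add_mul_sum_antidiagonal_choose_mul_choose_mul_fst (b r s : ℕ) :
    (b + r) * ∑ p ∈ antidiagonal s, b.choose p.1 * r.choose p.2 * p.1 =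
      b * s * (b + r).choose s := by
  cases s with
  | zero => simp
  | succ t =>
    cases b with
    | zero => simp [Nat.sum_antidiagonal_succ]
    | succ b =>
      have hvand : ∑ p ∈ antidiagonal t, b.choose p.1 * r.choose p.2 = (b + r).choose t :=
        (Nat.add_choose_eq b r t).symm
      have hsum : ∑ p ∈ antidiagonal (t + 1), (b + 1).choose p.1 * r.choose p.2 * p.1 =
          (b + 1) * (b + r).choose t := by
        rw [Nat.sum_antidiagonal_succ, ← hvand, mul_sum]
        simp only [mul_zero, zero_add]
        refine sum_congr rfl fun p _ => ?_
        rw [mul_right_comm, ← Nat.add_one_mul_choose_eq]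
        ring
      rw [hsum, show b + 1 + r = b + r + 1 by ring, mul_assoc, mul_comm (t + 1),
        ← Nat.add_one_mul_choose_eq]
      ring

theorem MonovaryOn.weighted_sum_mul_sum_le {R ι : Type*} [CommRing R] [LinearOrder R]
    [IsStrictOrderedRing R] {s : Finset ι} {w f g : ι → R} (hw : ∀ i ∈ s, 0 ≤ w i)
    (hfg : MonovaryOn f g s) :
    (∑ i ∈ s, w i * f i) * ∑ i ∈ s, w i * g i ≤ (∑ i ∈ s, w i) * ∑ i ∈ s, w i * (f i * g i) := by
  have hsq : 0 ≤ ∑ i ∈ s, ∑ j ∈ s, w i * w j * ((f j - f i) * (g j - g i)) :=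
    sum_nonneg fun i hi => sum_nonneg fun j hj =>
      mul_nonneg (mul_nonneg (hw i hi) (hw j hj)) (hfg.sub_mul_sub_nonneg hi hj)
  have hexpand (i j : ι) : w i * w j * ((f j - f i) * (g j - g i)) =
      w i * (w j * (f j * g j)) + w j * (w i * (f i * g i)) - w i * f i * (w j * g j) -
        w j * f j * (w i * g i) := by ring
  simp only [hexpand, sum_sub_distrib, sum_add_distrib, ← mul_sum, ← sum_mul] at hsq
  linarith

/-- `C(b + r, s) · E[x ^ X]`, where `X` counts the points of a fixed `b`-set in a uniformly random
`s`-subset of a `(b + r)`-set. -/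
noncomputable def hypergeomGen (b r s : ℕ) (x : ℝ) : ℝ :=
  ∑ p ∈ antidiagonal s, x ^ p.1 * (b.choose p.1 * r.choose p.2)

theorem succ_mul_hypergeomGen_succ (b r s : ℕ) (x : ℝ) :
    (s + 1) * hypergeomGen b r (s + 1) x = ∑ p ∈ antidiagonal s,
      x ^ p.1 * (b.choose p.1 * r.choose p.2) * (x * (b - p.1) + (r - p.2)) := by
  have hsplit : (s + 1) * hypergeomGen b r (s + 1) x =
      ∑ p ∈ antidiagonal (s + 1), p.1 * (x ^ p.1 * (b.choose p.1 * r.choose p.2)) +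
      ∑ p ∈ antidiagonal (s + 1), p.2 * (x ^ p.1 * (b.choose p.1 * r.choose p.2)) := by
    rw [hypergeomGen, mul_sum, ← sum_add_distrib]
    refine sum_congr rfl fun p hp => ?_
    rw [← add_mul]
    congr 1
    exact_mod_cast (HasAntidiagonal.mem_antidiagonal.1 hp).symm
  rw [hsplit, Nat.sum_antidiagonal_succ, Nat.sum_antidiagonal_succ']
  simp only [Nat.cast_zero, zero_mul, zero_add, ← sum_add_distrib]
  refine sum_congr rfl fun p _ => ?_
  push_cast
  linear_combination (x ^ p.1 * r.choose p.2 * x) * Nat.cast_choose_succ_right_eq (R := ℝ) b p.1 +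
    (x ^ p.1 * b.choose p.1) * Nat.cast_choose_succ_right_eq (R := ℝ) r p.2

theorem mul_hypergeomGen_le_sum_fst_mul (b r : ℕ) {s : ℕ} (hs : s ≤ b + r) {x : ℝ} (hx : 1 ≤ x) :
    b * s * hypergeomGen b r s x ≤
      (b + r) * ∑ p ∈ antidiagonal s, p.1 * (x ^ p.1 * (b.choose p.1 * r.choose p.2)) := by
  set w : ℕ × ℕ → ℝ := fun p => b.choose p.1 * r.choose p.2
  have hmass : ∑ p ∈ antidiagonal s, w p = (b + r).choose s := by
    simp only [w]; exact_mod_cast (Nat.add_choose_eq b r s).symm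
  have hmean : (b + r) * ∑ p ∈ antidiagonal s, w p * p.1 = b * s * (b + r).choose s := by
    simp only [w]; exact_mod_cast add_mul_sum_antidiagonal_choose_mul_choose_mul_fst b r s
  have hcheb := MonovaryOn.weighted_sum_mul_sum_le (s := antidiagonal s) (w := w)
    (f := fun p => (p.1 : ℝ)) (g := fun p => x ^ p.1) (fun p _ => by positivity)
    (((Monotone.monovary (f := fun i : ℕ => (i : ℝ)) Nat.mono_cast
      (pow_right_mono₀ hx)).comp_right Prod.fst).monovaryOn _)
  have hpos : (0 : ℝ) < (b + r).choose s := by exact_mod_cast Nat.choose_pos hs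
  rw [hmass] at hcheb
  have hG : hypergeomGen b r s x = ∑ p ∈ antidiagonal s, w p * x ^ p.1 :=
    sum_congr rfl fun _ _ => mul_comm _ _
  have hH : ∑ p ∈ antidiagonal s, p.1 * (x ^ p.1 * (b.choose p.1 * r.choose p.2)) =
      ∑ p ∈ antidiagonal s, w p * (p.1 * x ^ p.1) :=
    sum_congr rfl fun _ _ => by ring
  refine le_of_mul_le_mul_left ?_ hpos
  calc ((b + r).choose s : ℝ) * (b * s * hypergeomGen b r s x)
      = (b + r) * ((∑ p ∈ antidiagonal s, w p * p.1) * hypergeomGen b r s x) := by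
        rw [← mul_assoc (_ + _), hmean]; ring
    _ ≤ (b + r) * ((b + r).choose s * ∑ p ∈ antidiagonal s, w p * (p.1 * x ^ p.1)) := by
        rw [hG]; gcongr
    _ = _ := by rw [hH]; ring

theorem succ_mul_hypergeomGen_succ_le (b r : ℕ) {s : ℕ} (hs : s < b + r) {x : ℝ} (hx : 1 ≤ x) :
    (s + 1) * hypergeomGen b r (s + 1) x ≤
      (b + r - s) * (1 + (x - 1) * b / (b + r)) * hypergeomGen b r s x := by
  set H := ∑ p ∈ antidiagonal s, p.1 * (x ^ p.1 * (b.choose p.1 * r.choose p.2 : ℝ))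
  have hn : (0 : ℝ) < b + r := by exact_mod_cast (Nat.zero_le s).trans_lt hs
  have hrec : (s + 1) * hypergeomGen b r (s + 1) x =
      (x * b + r - s) * hypergeomGen b r s x - (x - 1) * H := by
    rw [succ_mul_hypergeomGen_succ, hypergeomGen, mul_sum, mul_sum, ← sum_sub_distrib]
    refine sum_congr rfl fun p hp => ?_
    have hsnd : (p.2 : ℝ) = s - p.1 := by
      rw [eq_sub_iff_add_eq']; exact_mod_cast HasAntidiagonal.mem_antidiagonal.1 hp
    rw [hsnd]; ring
  have hfactor : (b + r - s) * (1 + (x - 1) * b / (b + r)) =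
      x * b + r - s - (x - 1) * (b * s / (b + r)) := by
    field_simp; ring
  have hbias : b * s / (b + r) * hypergeomGen b r s x ≤ H := by
    rw [div_mul_eq_mul_div, div_le_iff₀ hn, mul_comm H]
    exact mul_hypergeomGen_le_sum_fst_mul b r hs.le hx
  rw [hrec, hfactor]
  linarith [mul_le_mul_of_nonneg_left hbias (sub_nonneg.2 hx)]

theorem hypergeomGen_le (b r : ℕ) {s : ℕ} (hs : s ≤ b + r) {x : ℝ} (hx : 1 ≤ x) :
    hypergeomGen b r s x ≤ (b + r).choose s * (1 + (x - 1) * b / (b + r)) ^ s := by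
  induction s with
  | zero => simp [hypergeomGen]
  | succ s ih =>
    set y := 1 + (x - 1) * b / (b + r)
    have hsn : (s : ℝ) ≤ b + r := by exact_mod_cast (Nat.le_succ s).trans hs
    refine le_of_mul_le_mul_left ?_ (by positivity : (0 : ℝ) < s + 1)
    calc (s + 1) * hypergeomGen b r (s + 1) x
        ≤ (b + r - s) * y * hypergeomGen b r s x := succ_mul_hypergeomGen_succ_le b r hs hx
      _ ≤ (b + r - s) * y * ((b + r).choose s * y ^ s) := by
        gcongr
        exact ih (Nat.le_of_succ_le hs)
      _ = (s + 1) * ((b + r).choose (s + 1) * y ^ (s + 1)) := by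
        rw [pow_succ]
        have := Nat.cast_choose_succ_right_eq (R := ℝ) (b + r) s
        push_cast at this
        linear_combination (-y ^ s * y) * this

theorem sum_Icc_choose_mul_choose_mul_pow_le (b r s m : ℕ) {x : ℝ} (hx : 1 ≤ x) :
    (∑ j ∈ Icc m s, (b.choose j * r.choose (s - j) : ℝ)) * x ^ m ≤ hypergeomGen b r s x := by
  rw [hypergeomGen, Nat.sum_antidiagonal_eq_sum_range_succ
    (fun i j => x ^ i * (b.choose i * r.choose j : ℝ)), sum_mul]
  calc ∑ j ∈ Icc m s, (b.choose j * r.choose (s - j) : ℝ) * x ^ m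
      ≤ ∑ j ∈ Icc m s, x ^ j * (b.choose j * r.choose (s - j) : ℝ) :=
        sum_le_sum fun j hj => by
          rw [mul_comm]; gcongr
          exact (mem_Icc.1 hj).1
    _ ≤ ∑ j ∈ range (s + 1), x ^ j * (b.choose j * r.choose (s - j) : ℝ) :=
        sum_le_sum_of_subset_of_nonneg
          (fun j hj => mem_range.2 (Nat.lt_succ_of_le (mem_Icc.1 hj).2))
          (fun _ _ _ => by positivity)

theorem two_mul_div_le_log_div {ε α : ℝ} (hε : 0 ≤ ε) (hεα : ε < α) :
    2 * ε / (2 * α - ε) ≤ Real.log (α / (α - ε)) := by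
  have hd : 0 < 2 * α - ε := by linarith
  have hαε : 0 < α - ε := by linarith
  have ht0 : 0 ≤ ε / (2 * α - ε) := div_nonneg hε hd.le
  have ht1 : ε / (2 * α - ε) < 1 := by rw [div_lt_one hd]; linarith
  have hsum := le_hasSum (Real.hasSum_log_sub_log_of_abs_lt_one
    (abs_lt.2 ⟨by linarith, ht1⟩)) 0 fun k _ => by positivity
  have hquot : (1 + ε / (2 * α - ε)) / (1 - ε / (2 * α - ε)) = α / (α - ε) := by
    rw [one_add_div hd.ne', one_sub_div hd.ne', div_div_div_cancel_right₀ hd.ne',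
      div_eq_div_iff (by linarith) hαε.ne']
    ring
  rw [← Real.log_div (by linarith) (by linarith), hquot] at hsum
  norm_num at hsum
  rwa [mul_div_assoc]

noncomputable def bernoulliKL (a p : ℝ) : ℝ :=
  a * Real.log (a / p) + (1 - a) * Real.log ((1 - a) / (1 - p))

theorem sq_div_le_bernoulliKL {ε α : ℝ} (hε : 0 ≤ ε) (hεα : ε < α) (hα : α < 1) :
    ε ^ 2 / (2 * α - ε) ≤ bernoulliKL α (α - ε) := by
  have hd : 0 < 2 * α - ε := by linarith
  have hα0 : 0 < 1 - α := by linarith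
  have hfirst := mul_le_mul_of_nonneg_left (two_mul_div_le_log_div hε hεα) (by linarith : 0 ≤ α)
  have hsecond := mul_le_mul_of_nonneg_left
    (Real.one_sub_inv_le_log_of_pos (div_pos hα0 (by linarith : 0 < 1 - (α - ε)))) hα0.le
  have hsecond' : (1 - α) * (1 - ((1 - α) / (1 - (α - ε)))⁻¹) = -ε := by
    field_simp; ring
  have hsplit : ε ^ 2 / (2 * α - ε) = α * (2 * ε / (2 * α - ε)) - ε := by
    field_simp; ring
  rw [bernoulliKL, hsplit]
  linarith

theorem sum_Icc_choose_mul_choose_le_exp (b r s m : ℕ) (hs : s ≤ b + r) {α p : ℝ}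
    (hp : 0 < p) (hpα : p ≤ α) (hα : α < 1) (hb : b ≤ p * (b + r)) (hm : α * s ≤ m) :
    ∑ j ∈ Icc m s, (b.choose j * r.choose (s - j) : ℝ) ≤
      (b + r).choose s * Real.exp (-(s * bernoulliKL α p)) := by
  set u := (1 - p) / (1 - α)
  -- the minimiser of `x ^ (-α) * (1 + (x - 1) p)`
  set x := α / p * u
  have hα0 : 0 < 1 - α := by linarith
  have hu : 1 ≤ u := (one_le_div hα0).2 (by linarith)
  have hu0 : 0 < u := by linarith
  have hx : 1 ≤ x := one_le_mul_of_one_le_of_one_le ((one_le_div hp).2 hpα) hu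
  have hgen : hypergeomGen b r s x ≤ (b + r).choose s * u ^ s := by
    refine (hypergeomGen_le b r hs hx).trans ?_
    have hbp : (b : ℝ) / (b + r) ≤ p := div_le_of_le_mul₀ (by positivity) hp.le hb
    have hxu : 1 + (x - 1) * p = u := by simp only [x, u]; field_simp; ring
    rw [← hxu, mul_div_assoc]
    gcongr
  have hKL : bernoulliKL α p = α * Real.log x - Real.log u := by
    rw [bernoulliKL, Real.log_mul (div_pos (hp.trans_le hpα) hp).ne' hu0.ne',
      ← inv_div (1 - p), Real.log_inv]
    ring
  have hxm : Real.exp (α * s * Real.log x) ≤ x ^ m := by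
    rw [← Real.exp_log (by positivity : 0 < x ^ m), Real.log_pow]
    gcongr
    exact Real.log_nonneg hx
  have hus : u ^ s = Real.exp (-(s * bernoulliKL α p)) * Real.exp (α * s * Real.log x) := by
    rw [← Real.exp_add, hKL, ← Real.exp_log (by positivity : 0 < u ^ s), Real.log_pow]
    ring_nf
  refine le_of_mul_le_mul_right ?_ (by positivity : 0 < x ^ m)
  calc (∑ j ∈ Icc m s, (b.choose j * r.choose (s - j) : ℝ)) * x ^ m
      ≤ hypergeomGen b r s x := sum_Icc_choose_mul_choose_mul_pow_le b r s m hx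
    _ ≤ (b + r).choose s * u ^ s := hgen
    _ ≤ (b + r).choose s * Real.exp (-(s * bernoulliKL α p)) * x ^ m := by
      rw [hus, ← mul_assoc]; gcongr

theorem hypergeometric_tail_bound_committees_general (n q c : ℕ) (ε α : ℝ)
    (hc1 : 1 ≤ c) (hε : 0 < ε) (hεα : ε < α)
    (hα : α ≤ 1 / 3) (b s : ℕ) (hb : b = ⌊(α - ε) * (n : ℝ)⌋₊)
    (hs : s = ⌈((2 * α - ε) / ε ^ 2) * (((n : ℝ) * Real.log 2) / (c : ℝ) + Real.log q)⌉₊)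
    (hsn : s ≤ n)
    (T : ℕ)
    (hT : T = ∑ j ∈ Finset.Icc ⌈α * (s : ℝ)⌉₊ s, b.choose j * (n - b).choose (s - j)) :
    (T : ℝ) ^ c * 2 ^ n * (q : ℝ) ^ c ≤ ((n.choose s : ℕ) : ℝ) ^ c := by
  set R := (n : ℝ) * Real.log 2 / c + Real.log q
  have hbR : (b : ℝ) ≤ (α - ε) * n := hb ▸ Nat.floor_le (by nlinarith)
  have hbn : b ≤ n := by
    have : (b : ℝ) ≤ n := hbR.trans (by nlinarith [n.cast_nonneg (α := ℝ)])
    exact_mod_cast this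
  have hRs : R ≤ s * bernoulliKL α (α - ε) := by
    have hd : 0 < 2 * α - ε := by linarith
    calc R = (2 * α - ε) / ε ^ 2 * R * (ε ^ 2 / (2 * α - ε)) := by field_simp
      _ ≤ s * (ε ^ 2 / (2 * α - ε)) := by gcongr; exact hs ▸ Nat.le_ceil _
      _ ≤ s * bernoulliKL α (α - ε) := by gcongr; exact sq_div_le_bernoulliKL hε.le hεα (by linarith)
  have hTR : (T : ℝ) ≤ n.choose s * Real.exp (-R) := by
    have htail := sum_Icc_choose_mul_choose_le_exp b (n - b) s ⌈α * s⌉₊ (by omega)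
      (by linarith : 0 < α - ε) (by linarith) (by linarith)
      (by rwa [← Nat.cast_add, Nat.add_sub_cancel' hbn]) (Nat.le_ceil _)
    rw [Nat.add_sub_cancel' hbn] at htail
    rw [hT]; push_cast
    exact htail.trans (by gcongr)
  have hscale : Real.exp (-R) ^ c * 2 ^ n * q ^ c ≤ 1 := by
    have hq : (q : ℝ) ^ c ≤ Real.exp (Real.log q) ^ c := by gcongr; exact Real.le_exp_log _
    have hcR : c * -R + n * Real.log 2 + c * Real.log q = 0 := by
      simp only [R]; field_simp; ring
    calc Real.exp (-R) ^ c * 2 ^ n * q ^ c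
        ≤ Real.exp (-R) ^ c * Real.exp (Real.log 2) ^ n * Real.exp (Real.log q) ^ c := by
          rw [Real.exp_log two_pos]; gcongr
      _ = 1 := by rw [← Real.exp_nat_mul, ← Real.exp_nat_mul, ← Real.exp_nat_mul, ← Real.exp_add,
        ← Real.exp_add, hcR, Real.exp_zero]
  calc (T : ℝ) ^ c * 2 ^ n * q ^ c ≤ (n.choose s * Real.exp (-R)) ^ c * 2 ^ n * q ^ c := by
        gcongr
    _ = (n.choose s) ^ c * (Real.exp (-R) ^ c * 2 ^ n * q ^ c) := by ring
    _ ≤ ((n.choose s : ℕ) : ℝ) ^ c := mul_le_of_le_one_right (by positivity) hscale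

/-- Hypergeometric tail bound for the committees: with `n, q ≥ 1`, `1 ≤ c ≤ q`,
reals `0 < ε < α ≤ 1/3`, `b = ⌊(α − ε)n⌋ ≥ 1`,
`s = ⌈((2α − ε)/ε²)((n ln 2)/c + ln q)⌉ ≤ n`, and
`T = ∑_{j=⌈αs⌉}^{s} C(b,j)·C(n−b, s−j)`, we have `T^c · 2^n · q^c ≤ C(n,s)^c`. -/
theorem hypergeometric_tail_bound_committees (n q c : ℕ) (ε α : ℝ) (hn : 1 ≤ n)
    (hq : 1 ≤ q) (hc1 : 1 ≤ c) (hcq : c ≤ q) (hε : 0 < ε) (hεα : ε < α)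
    (hα : α ≤ 1 / 3) (b s : ℕ) (hb : b = ⌊(α - ε) * (n : ℝ)⌋₊) (hb1 : 1 ≤ b)
    (hs : s = ⌈((2 * α - ε) / ε ^ 2) * (((n : ℝ) * Real.log 2) / (c : ℝ) + Real.log q)⌉₊)
    (hsn : s ≤ n)
    (T : ℕ)
    (hT : T = ∑ j ∈ Finset.Icc ⌈α * (s : ℝ)⌉₊ s, b.choose j * (n - b).choose (s - j)) :
    (T : ℝ) ^ c * 2 ^ n * (q : ℝ) ^ c ≤ ((n.choose s : ℕ) : ℝ) ^ c :=
  hypergeometric_tail_bound_committees_general n q c ε α hc1 hε hεα hα b s hb hs hsn T hT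
end

section
/- For every integer q ≥ 1 and every real number z > 0, if X is the sum of q independent Bernoulli random variables each taking the values 0 and 1 with probability 1/2 each, then Pr[|X − q/2| < (5z·√q)/8] < z + 1.6/√q. Equivalently, in combinatorial form: 2^(−q) · (∑_{k ∈ {0,…,q}, |k − q/2| < (5z√q)/8} C(q,k)) < z + 1.6/√q. -/
open scoped Classical

lemma lemA : ∀ n : ℕ, 2 ≤ n → (Nat.centralBinom n)^2 * (704*n+192) ≤ 225 * 16^n := by
  intro n hn
  induction n with
  | zero => omega
  | succ m ih =>
    rcases Nat.lt_or_ge m 2 with h | h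
    · have hm : m = 1 := by omega
      subst hm
      norm_num [Nat.centralBinom, Nat.choose]
    · have ih' := ih h
      have key := Nat.succ_mul_centralBinom_succ m
      have hpos : 0 < (m+1)^2 := by positivity
      have hcoef : 4*(2*m+1)^2*(704*m+896) ≤ 16*(m+1)^2*(704*m+192) := by nlinarith
      apply Nat.le_of_mul_le_mul_left _ hpos
      calc (m+1)^2 * (Nat.centralBinom (m+1)^2 * (704*(m+1)+192))
          = ((m+1)*Nat.centralBinom (m+1))^2 * (704*m+896) := by ring
        _ = (2*(2*m+1)*Nat.centralBinom m)^2 * (704*m+896) := by rw [key]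
        _ = (4*(2*m+1)^2*(704*m+896)) * Nat.centralBinom m ^2 := by ring
        _ ≤ (16*(m+1)^2*(704*m+192)) * Nat.centralBinom m ^2 :=
            Nat.mul_le_mul_right _ hcoef
        _ = 16*(m+1)^2 * (Nat.centralBinom m ^2 * (704*m+192)) := by ring
        _ ≤ 16*(m+1)^2 * (225*16^m) := Nat.mul_le_mul_left _ ih'
        _ = (m+1)^2 * (225*16^(m+1)) := by ring

lemma lemB : ∀ q : ℕ, 1 ≤ q → 25 * (q.choose (q/2))^2 * q < 16 * 4^q := by
  intro q hq
  rcases Nat.even_or_odd q with ⟨n, hn⟩ | ⟨n, hn⟩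
  · subst hn
    have hq2 : (n + n)/2 = n := by omega
    rw [hq2]
    have hc : (n+n).choose n = Nat.centralBinom n := by
      rw [Nat.centralBinom_eq_two_mul_choose]; ring_nf
    rw [hc]
    rcases Nat.lt_or_ge n 2 with h | h
    · interval_cases n
      · omega
      · norm_num [Nat.centralBinom, Nat.choose]
    · have hA := lemA n h
      have hpos : 0 < 704*n+192 := by positivity
      apply Nat.lt_of_mul_lt_mul_left (a := 704*n+192)
      have h16 : (1:ℕ) ≤ 16^n := Nat.one_le_pow _ _ (by norm_num)
      calc (704*n+192) * (25 * Nat.centralBinom n ^2 * (n+n))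
          = 50*n * (Nat.centralBinom n ^2 * (704*n+192)) := by ring
        _ ≤ 50*n * (225*16^n) := Nat.mul_le_mul_left _ hA
        _ = 11250*n*16^n := by ring
        _ < (704*n+192) * (16*16^n) := by
            have hb : 0 < (14*n+3072)*16^n := by positivity
            calc 11250*n*16^n < 11250*n*16^n + (14*n+3072)*16^n := by omega
              _ = (704*n+192) * (16*16^n) := by ring
        _ = (704*n+192) * (16*4^(n+n)) := by
            rw [pow_add, ← mul_pow]; norm_num
  · subst hn
    have hq2 : (2*n + 1)/2 = n := by omega
    rw [hq2]
    have hc : Nat.centralBinom (n+1) = 2 * (2*n+1).choose n := by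
      rw [Nat.centralBinom_eq_two_mul_choose]
      have : 2*(n+1) = (2*n+1) + 1 := by ring
      rw [this, Nat.choose_succ_succ, Nat.choose_symm_half]
      ring
    rcases Nat.lt_or_ge n 1 with h | h
    · interval_cases n
      · norm_num [Nat.choose]
    · have hA := lemA (n+1) (by omega)
      rw [hc] at hA
      have h16 : (1:ℕ) ≤ 16^n := Nat.one_le_pow _ _ (by norm_num)
      have hpos : 0 < 4*(704*n+896) := by positivity
      apply Nat.lt_of_mul_lt_mul_left (a := 4*(704*n+896))
      calc (4*(704*n+896)) * (25 * ((2*n+1).choose n)^2 * (2*n+1))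
          = 25*(2*n+1) * ((2*((2*n+1).choose n))^2 * (704*(n+1)+192)) := by ring
        _ ≤ 25*(2*n+1) * (225*16^(n+1)) := Nat.mul_le_mul_left _ hA
        _ = (180000*n + 90000) * 16^n := by ring
        _ < (4*(704*n+896)) * (16 * (4 * 16^n)) := by
            have hb : 0 < (224*n+139376)*16^n := by positivity
            calc (180000*n + 90000) * 16^n
                < (180000*n + 90000) * 16^n + (224*n+139376)*16^n := by omega
              _ = (4*(704*n+896)) * (16 * (4 * 16^n)) := by ring
        _ = (4*(704*n+896)) * (16*4^(2*n+1)) := by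
            rw [pow_succ, pow_mul]; norm_num; ring

/-- For `q ≥ 1` and real `z > 0`, a symmetric binomial `X` with parameter `q` satisfies
`Pr[|X − q/2| < 5z√q/8] < z + 1.6/√q`, written combinatorially. -/
theorem symmetric_binomial_near_center_bound (q : ℕ) (z : ℝ) (hq : 1 ≤ q) (hz : 0 < z) :
    (2 : ℝ)⁻¹ ^ q *
      ∑ k ∈ (Finset.range (q + 1)).filter
        (fun k : ℕ => |(k : ℝ) - (q : ℝ) / 2| < 5 * z * Real.sqrt q / 8),
        (q.choose k : ℝ)
      < z + 1.6 / Real.sqrt q := by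
  have hsq : (0:ℝ) < Real.sqrt q := Real.sqrt_pos.mpr (by exact_mod_cast hq)
  set R : ℝ := 5 * z * Real.sqrt q / 8 with hR
  have hRpos : 0 < R := by positivity
  set S := (Finset.range (q + 1)).filter
      (fun k : ℕ => |(k : ℝ) - (q : ℝ) / 2| < R) with hS
  set M : ℕ := q.choose (q/2) with hM
  -- bound on M
  have hB : (25:ℝ) * (M:ℝ)^2 * q < 16 * 4^q := by exact_mod_cast lemB q hq
  have hM2 : (M:ℝ) * (2:ℝ)⁻¹^q < 4 / (5 * Real.sqrt q) := by
    have h2q : (0:ℝ) < (2:ℝ)^q := by positivity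
    rw [inv_pow, ← div_eq_mul_inv, div_lt_div_iff₀ h2q (by positivity)]
    have : (5 * Real.sqrt q * (M:ℝ))^2 < (4 * 2^q)^2 := by
      have hsq2 : Real.sqrt q ^ 2 = (q:ℝ) := Real.sq_sqrt (by positivity)
      have h4 : ((4:ℝ)*2^q)^2 = 16 * 4^q := by
        rw [mul_pow, ← pow_mul, mul_comm q 2, pow_mul]; norm_num
      rw [h4]; nlinarith
    calc (M:ℝ) * (5 * Real.sqrt q) = 5 * Real.sqrt q * (M:ℝ) := by ring
      _ < 4 * 2^q := lt_of_pow_lt_pow_left₀ 2 (by positivity) this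
  rcases S.eq_empty_or_nonempty with he | hne
  · rw [hS] at he ⊢
    rw [he]
    simp only [Finset.sum_empty, mul_zero]
    positivity
  · -- card bound
    set c : ℕ := ⌈2*R⌉₊ with hc
    have hsub : S ⊆ Finset.Ico (S.min' hne) (S.min' hne + c) := by
      intro k hk
      have hka := S.min'_le k hk
      have hmem : ∀ j ∈ S, |(j : ℝ) - (q : ℝ) / 2| < R := by
        intro j hj
        rw [hS] at hj
        exact (Finset.mem_filter.mp hj).2
      have h1 := abs_lt.mp (hmem k hk)
      have h2 := abs_lt.mp (hmem (S.min' hne) (S.min'_mem hne))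
      have hkr : (k:ℝ) < (S.min' hne : ℝ) + c := by
        have : (k:ℝ) - (S.min' hne : ℝ) < 2*R := by linarith [h1.2, h2.1]
        have h2c : 2*R ≤ (c:ℝ) := Nat.le_ceil _
        linarith
      have : k < S.min' hne + c := by exact_mod_cast hkr
      exact Finset.mem_Ico.mpr ⟨hka, this⟩
    have hcard : S.card ≤ c := by
      calc S.card ≤ (Finset.Ico (S.min' hne) (S.min' hne + c)).card :=
            Finset.card_le_card hsub
        _ = c := by rw [Nat.card_Ico]; omega
    have hsum : ∑ k ∈ S, (q.choose k : ℝ) ≤ (S.card : ℝ) * M := by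
      have := Finset.sum_le_card_nsmul S (fun k => (q.choose k : ℝ)) (M:ℝ)
        (fun k _ => show ((q.choose k : ℝ)) ≤ (M:ℝ) by exact_mod_cast Nat.choose_le_middle k q)
      simpa [nsmul_eq_mul] using this
    have hcR : (S.card : ℝ) < 2*R + 1 := by
      have h1 : ((S.card : ℝ)) ≤ (c:ℝ) := by exact_mod_cast hcard
      have h2 : (c:ℝ) < 2*R + 1 := Nat.ceil_lt_add_one (by positivity)
      linarith
    have hMnn : (0:ℝ) ≤ (M:ℝ) * (2:ℝ)⁻¹^q := by positivity
    calc (2 : ℝ)⁻¹ ^ q * ∑ k ∈ S, (q.choose k : ℝ)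
        ≤ (2 : ℝ)⁻¹ ^ q * ((S.card : ℝ) * M) := by
          apply mul_le_mul_of_nonneg_left hsum (by positivity)
      _ = (S.card : ℝ) * ((M:ℝ) * (2:ℝ)⁻¹^q) := by ring
      _ < (2*R + 1) * (4 / (5 * Real.sqrt q)) := by
          apply mul_lt_mul'' hcR hM2 (by positivity) hMnn
      _ = z + 4 / (5 * Real.sqrt q) := by
          rw [hR]; field_simp; ring
      _ ≤ z + 1.6 / Real.sqrt q := by
          have : 4 / (5 * Real.sqrt q) ≤ 1.6 / Real.sqrt q := by
            rw [div_le_div_iff₀ (by positivity) hsq]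
            nlinarith
          linarith
end
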